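/- arXiv:1212.6732 — 8 statements merged into one kernel-verified Lean document; each statement's English description precedes it below -/
import Mathlib

section
/- Let l be a convex loss function that is bounded below by two affine functions x ↦ bx + c and x ↦ b'x + c with b > 1 > b'. Then for any integrable random variable X (with E[l(η-X)] finite for all η), the convex function η ↦ E[l(η - X)] - η attains its infimum at some η* ∈ ℝ. -/
open MeasureTheory Real

/-- If a loss function is bounded below by two affine functions with slopes
`b > 1 > b'`, then `η ↦ E[l (η - X)] - η` attains its infimum at some `η* ∈ ℝ`. -/
theorem oce_attains_inf
    {Ω : Type*} [MeasurableSpace Ω] (μ : Measure Ω) [IsProbabilityMeasure μ]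
    (l : ℝ → ℝ) (hmono : Monotone l) (hconv : ConvexOn ℝ Set.univ l)
    (h0 : l 0 = 0) (hx : ∀ x : ℝ, x ≤ l x)
    (b b' c : ℝ) (hb : 1 < b) (hb' : b' < 1)
    (hbc : ∀ x : ℝ, max (b * x + c) (b' * x + c) ≤ l x)
    (X : Ω → ℝ) (hX : Integrable X μ)
    (hint : ∀ η : ℝ, Integrable (fun ω => l (η - X ω)) μ) :
    ∃ ηstar : ℝ, ∀ η : ℝ,
      (∫ ω, l (ηstar - X ω) ∂μ) - ηstar ≤ (∫ ω, l (η - X ω) ∂μ) - η := by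
  set f : ℝ → ℝ := fun η => (∫ ω, l (η - X ω) ∂μ) - η with hf
  have key : ∀ (β : ℝ), (∀ x : ℝ, β * x + c ≤ l x) → ∀ η : ℝ,
      β * η + c - β * ∫ ω, X ω ∂μ ≤ ∫ ω, l (η - X ω) ∂μ := by
    intro β hβ η
    have h1 : Integrable (fun ω => β * (η - X ω)) μ := by
      exact ((integrable_const η).sub hX).const_mul β
    have hi : Integrable (fun ω => β * (η - X ω) + c) μ := h1.add (integrable_const c)
    have hmono' := integral_mono hi (hint η) (fun ω => hβ (η - X ω))
    have h2 : Integrable (fun ω => η - X ω) μ := by exact (integrable_const η).sub hX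
    calc β * η + c - β * ∫ ω, X ω ∂μ = ∫ ω, β * (η - X ω) + c ∂μ := by
          rw [integral_add h1 (integrable_const c), integral_const_mul,
            integral_sub (integrable_const η) hX, integral_const, integral_const]
          simp [measure_univ]
          ring
      _ ≤ _ := hmono'
  have keyb : ∀ η : ℝ, b * η + c - b * ∫ ω, X ω ∂μ ≤ ∫ ω, l (η - X ω) ∂μ :=
    key b (fun x => le_trans (le_max_left _ _) (hbc x))
  have keyb' : ∀ η : ℝ, b' * η + c - b' * ∫ ω, X ω ∂μ ≤ ∫ ω, l (η - X ω) ∂μ :=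
    key b' (fun x => le_trans (le_max_right _ _) (hbc x))
  -- f is convex
  have hfconv : ConvexOn ℝ Set.univ f := by
    refine ConvexOn.sub ?_ (concaveOn_id convex_univ)
    refine ⟨convex_univ, fun η₁ _ η₂ _ a d ha hd had => ?_⟩
    have hpt : ∀ ω, l ((a • η₁ + d • η₂) - X ω) ≤ a * l (η₁ - X ω) + d * l (η₂ - X ω) := by
      intro ω
      have h := hconv.2 (Set.mem_univ (η₁ - X ω)) (Set.mem_univ (η₂ - X ω)) ha hd had
      have heq : a • (η₁ - X ω) + d • (η₂ - X ω) = (a • η₁ + d • η₂) - X ω := by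
        simp only [smul_eq_mul]
        linear_combination (-(X ω)) * had
      rw [heq] at h
      simpa using h
    calc (∫ ω, l ((a • η₁ + d • η₂) - X ω) ∂μ)
        ≤ ∫ ω, a * l (η₁ - X ω) + d * l (η₂ - X ω) ∂μ :=
          integral_mono (hint _) (((hint η₁).const_mul a).add ((hint η₂).const_mul d)) hpt
      _ = a • (∫ ω, l (η₁ - X ω) ∂μ) + d • (∫ ω, l (η₂ - X ω) ∂μ) := by
          rw [integral_add ((hint η₁).const_mul a) ((hint η₂).const_mul d),
            integral_const_mul, integral_const_mul]
          simp
  have hfcont : Continuous f := by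
    rw [← continuousOn_univ]
    exact hfconv.continuousOn isOpen_univ
  -- coercivity bounds
  have hfb : ∀ η : ℝ, (b - 1) * η + (c - b * ∫ ω, X ω ∂μ) ≤ f η := by
    intro η; have := keyb η; simp only [hf]; nlinarith
  have hfb' : ∀ η : ℝ, (b' - 1) * η + (c - b' * ∫ ω, X ω ∂μ) ≤ f η := by
    intro η; have := keyb' η; simp only [hf]; nlinarith
  obtain ⟨M₁, hM₁⟩ : ∃ M₁ : ℝ, ∀ η ≥ M₁, f 0 ≤ f η := by
    refine ⟨(f 0 - (c - b * ∫ ω, X ω ∂μ)) / (b - 1), fun η hη => ?_⟩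
    have hb1 : (0:ℝ) < b - 1 := by linarith
    have hc : (b - 1) * ((f 0 - (c - b * ∫ ω, X ω ∂μ)) / (b - 1))
        = f 0 - (c - b * ∫ ω, X ω ∂μ) := by field_simp
    have h2 := mul_le_mul_of_nonneg_left hη hb1.le
    rw [hc] at h2
    linarith [hfb η]
  obtain ⟨M₂, hM₂⟩ : ∃ M₂ : ℝ, ∀ η ≤ M₂, f 0 ≤ f η := by
    refine ⟨(f 0 - (c - b' * ∫ ω, X ω ∂μ)) / (b' - 1), fun η hη => ?_⟩
    have hb1 : b' - 1 < 0 := by linarith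
    have hc : (b' - 1) * ((f 0 - (c - b' * ∫ ω, X ω ∂μ)) / (b' - 1))
        = f 0 - (c - b' * ∫ ω, X ω ∂μ) := by
      field_simp
      exact mul_div_cancel_left₀ _ (by linarith : b' - 1 ≠ 0)
    have h2 := mul_le_mul_of_nonpos_left hη hb1.le
    rw [hc] at h2
    linarith [hfb' η]
  set A : ℝ := min M₂ 0 with hA
  set B : ℝ := max M₁ 0 with hB
  have h0mem : (0:ℝ) ∈ Set.Icc A B := ⟨min_le_right _ _, le_max_right _ _⟩
  obtain ⟨ηstar, hmem, hmin⟩ := (isCompact_Icc (a := A) (b := B)).exists_isMinOn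
    ⟨0, h0mem⟩ hfcont.continuousOn
  refine ⟨ηstar, fun η => ?_⟩
  have goal : f ηstar ≤ f η := by
    by_cases hmemη : η ∈ Set.Icc A B
    · exact hmin hmemη
    · have h0le : f ηstar ≤ f 0 := hmin h0mem
      by_cases h1 : η < A
      · have : η ≤ M₂ := le_of_lt (lt_of_lt_of_le h1 (min_le_left _ _))
        exact h0le.trans (hM₂ η this)
      · have h2 : B < η := by
          by_contra h2
          exact hmemη ⟨le_of_not_gt h1, le_of_not_gt h2⟩
        have : M₁ ≤ η := le_of_lt (lt_of_le_of_lt (le_max_left _ _) h2)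
        exact h0le.trans (hM₁ η this)
  simpa [hf] using goal
end

section
/- If η* minimizes the convex function η ↦ E[l(η - X)] - η, then E[l'₋(η* - X)] ≤ 1 ≤ E[l'₊(η* - X)], where l'₋ and l'₊ denote the left- and right-hand derivatives of the convex function l. -/
open MeasureTheory Real Set
open Filter Topology

lemma loss_strictMonoOn {l : ℝ → ℝ} (hconv : ConvexOn ℝ Set.univ l)
    (h0 : l 0 = 0) (hx : ∀ x : ℝ, x ≤ l x) : StrictMonoOn l (Ici 1) := by
  intro a ha b hb hab
  have ha1 : (1:ℝ) ≤ a := ha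
  have ha0 : (0:ℝ) < a := by linarith
  have h1 : (l 0 - l a) / (0 - a) ≤ (l b - l a) / (b - a) :=
    hconv.secant_mono (mem_univ a) (mem_univ 0) (mem_univ b)
      (by linarith : (0:ℝ) ≠ a) (by linarith : b ≠ a) (by linarith)
  have h2 : (1:ℝ) ≤ (l 0 - l a) / (0 - a) := by
    rw [h0, show (0 - l a) / (0 - a) = l a / a by ring_nf, le_div_iff₀ ha0, one_mul]
    exact hx a
  have h3 : (1:ℝ) ≤ (l b - l a) / (b - a) := h2.trans h1
  rw [le_div_iff₀ (by linarith : (0:ℝ) < b - a), one_mul] at h3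
  linarith

/-- A monotone left inverse of `l` on `[1, ∞)`. -/
noncomputable def lossInv (l : ℝ → ℝ) : ℝ → ℝ := fun y => sSup {x | 1 ≤ x ∧ l x ≤ y}

lemma lossInv_mono {l : ℝ → ℝ} (hx : ∀ x : ℝ, x ≤ l x) : Monotone (lossInv l) := by
  intro y₁ y₂ h
  unfold lossInv
  rcases eq_empty_or_nonempty {x | 1 ≤ x ∧ l x ≤ y₁} with he | hne
  · rw [he, Real.sSup_empty]
    rcases eq_empty_or_nonempty {x | 1 ≤ x ∧ l x ≤ y₂} with he2 | hne2
    · rw [he2, Real.sSup_empty]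
    · obtain ⟨x, hx1, _⟩ := hne2
      have hb : BddAbove {x | 1 ≤ x ∧ l x ≤ y₂} := by
        refine ⟨y₂, fun z hz => ?_⟩
        exact le_trans (hx z) hz.2
      exact le_trans (by linarith : (0:ℝ) ≤ x) (le_csSup hb ⟨hx1, ‹_›⟩)
  · apply csSup_le_csSup
    · refine ⟨y₂, fun z hz => le_trans (hx z) hz.2⟩
    · exact hne
    · exact fun z hz => ⟨hz.1, hz.2.trans h⟩

lemma lossInv_eq {l : ℝ → ℝ} (hconv : ConvexOn ℝ Set.univ l)
    (h0 : l 0 = 0) (hx : ∀ x : ℝ, x ≤ l x) {z : ℝ} (hz : 1 ≤ z) :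
    lossInv l (l z) = z := by
  have hsm := loss_strictMonoOn hconv h0 hx
  apply IsGreatest.csSup_eq
  constructor
  · exact ⟨hz, le_refl _⟩
  · intro w hw
    by_contra hlt
    push_neg at hlt
    exact absurd hw.2 (not_le.mpr (hsm hz hw.1 hlt))

lemma loss_continuous {l : ℝ → ℝ} (hconv : ConvexOn ℝ Set.univ l) : Continuous l := by
  rw [← continuousOn_univ]
  exact hconv.continuousOn isOpen_univ

/-- If `l (ηₙ - X)` is integrable for a sequence `ηₙ → ∞`, then `X` is a.e. measurable. -/
lemma aemeasurable_of_integrable_shifts {Ω : Type*} [MeasurableSpace Ω] {μ : Measure Ω}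
    {l : ℝ → ℝ} (hconv : ConvexOn ℝ Set.univ l)
    (h0 : l 0 = 0) (hx : ∀ x : ℝ, x ≤ l x)
    {X : Ω → ℝ} {η₀ : ℝ}
    (hint : ∀ n : ℕ, AEStronglyMeasurable (fun ω => l (η₀ + n - X ω)) μ) :
    AEMeasurable X μ := by
  have hψ : Measurable (lossInv l) := (lossInv_mono hx).measurable
  have hf : ∀ n : ℕ, AEMeasurable (fun ω => η₀ + n - lossInv l (l (η₀ + n - X ω))) μ := by
    intro n
    exact aemeasurable_const.sub (hψ.comp_aemeasurable (hint n).aemeasurable)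
  apply aemeasurable_of_tendsto_metrizable_ae' hf
  filter_upwards with ω
  have : ∀ᶠ n : ℕ in atTop, η₀ + n - lossInv l (l (η₀ + n - X ω)) = X ω := by
    rw [eventually_atTop]
    obtain ⟨N, hN⟩ := exists_nat_ge (1 + X ω - η₀)
    refine ⟨N, fun n hn => ?_⟩
    have h1 : (1:ℝ) ≤ η₀ + n - X ω := by
      have : (N:ℝ) ≤ n := Nat.cast_le.mpr hn
      linarith
    rw [lossInv_eq hconv h0 hx h1]
    ring
  exact Tendsto.congr' (this.mono fun n h => h.symm) tendsto_const_nhds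

/-- Integrability of `l (c - X)` for any constant `c`. -/
lemma integrable_loss_shift {Ω : Type*} [MeasurableSpace Ω] {μ : Measure Ω}
    [IsProbabilityMeasure μ] {l : ℝ → ℝ} (hmono : Monotone l)
    (hconv : ConvexOn ℝ Set.univ l) (h0 : l 0 = 0) (hx : ∀ x : ℝ, x ≤ l x)
    {X : Ω → ℝ} (hX : AEMeasurable X μ)
    (hXint2 : Integrable (fun ω => l (2 * |X ω|)) μ) (c : ℝ) :
    Integrable (fun ω => l (c - X ω)) μ := by
  have hcont := loss_continuous hconv
  have hmeas : AEStronglyMeasurable (fun ω => l (c - X ω)) μ :=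
    (hcont.measurable.comp_aemeasurable (aemeasurable_const.sub hX)).aestronglyMeasurable
  have hgint : Integrable (fun ω => |c| + l (2 * |c|) + l (2 * |X ω|)) μ :=
    (integrable_const _).add hXint2
  refine hgint.mono' hmeas (Filter.Eventually.of_forall fun ω => ?_)
  have hnn1 : 0 ≤ l (2 * |c|) := le_trans (by positivity) (hx _)
  have hnn2 : 0 ≤ l (2 * |X ω|) := le_trans (by positivity) (hx _)
  have hXle : |X ω| ≤ l (2 * |X ω|) := le_trans (by linarith [abs_nonneg (X ω)]) (hx (2 * |X ω|))
  rw [Real.norm_eq_abs, abs_le]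
  constructor
  · have h1 : c - X ω ≥ -(|c| + |X ω|) := by
      have := abs_sub c (X ω)
      have h2 := neg_abs_le (c - X ω)
      linarith [abs_nonneg c, abs_nonneg (X ω)]
    have := (hx (c - X ω))
    linarith
  · have h1 : l (c - X ω) ≤ l (|c| + |X ω|) := by
      apply hmono
      have := abs_sub (c) (X ω)
      calc c - X ω ≤ |c - X ω| := le_abs_self _
        _ ≤ |c| + |X ω| := abs_sub _ _
    have h2 : l (|c| + |X ω|) ≤ (1/2) * l (2 * |c|) + (1/2) * l (2 * |X ω|) := by
      have := hconv.2 (mem_univ (2 * |c|)) (mem_univ (2 * |X ω|))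
        (by norm_num : (0:ℝ) ≤ 1/2) (by norm_num : (0:ℝ) ≤ 1/2) (by norm_num)
      simpa [smul_eq_mul, show (1/2:ℝ) * (2 * |c|) + (1/2) * (2 * |X ω|) = |c| + |X ω| by ring]
        using this
    have := abs_nonneg c
    linarith


/-- If `η*` minimizes `η ↦ E[l (η - X)] - η`, then
`E[l'₋(η* - X)] ≤ 1 ≤ E[l'₊(η* - X)]`, where `l'₋`, `l'₊` are the one-sided
derivatives of the convex loss function `l`. -/
theorem first_order_condition
    {Ω : Type*} [MeasurableSpace Ω] (μ : Measure Ω) [IsProbabilityMeasure μ]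
    (l : ℝ → ℝ) (hmono : Monotone l) (hconv : ConvexOn ℝ Set.univ l)
    (h0 : l 0 = 0) (hx : ∀ x : ℝ, x ≤ l x)
    (lm lp : ℝ → ℝ)
    (hlm : ∀ x : ℝ, HasDerivWithinAt l (lm x) (Iic x) x)
    (hlp : ∀ x : ℝ, HasDerivWithinAt l (lp x) (Ici x) x)
    (X : Ω → ℝ)
    (hXint : ∀ c : ℝ, 0 < c → Integrable (fun ω => l (c * |X ω|)) μ)
    (ηstar : ℝ)
    (hlmint : Integrable (fun ω => lm (ηstar - X ω)) μ)
    (hlpint : Integrable (fun ω => lp (ηstar - X ω)) μ)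
    (hmin : ∀ η : ℝ,
      (∫ ω, l (ηstar - X ω) ∂μ) - ηstar ≤ (∫ ω, l (η - X ω) ∂μ) - η) :
    (∫ ω, lm (ηstar - X ω) ∂μ) ≤ 1 ∧ 1 ≤ ∫ ω, lp (ηstar - X ω) ∂μ := by
  -- Step 1: integrability of `l (η - X)` for large `η`, from the junk-value of integrals
  have hbig : ∀ η : ℝ, ηstar - (∫ ω, l (ηstar - X ω) ∂μ) < η →
      Integrable (fun ω => l (η - X ω)) μ := by
    intro η hη
    by_contra hni
    have h := hmin η
    rw [integral_undef hni] at h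
    linarith
  -- Step 2: `X` is a.e. measurable
  have hX : AEMeasurable X μ := by
    apply aemeasurable_of_integrable_shifts hconv h0 hx
      (η₀ := ηstar - (∫ ω, l (ηstar - X ω) ∂μ) + 1)
    intro n
    refine (hbig _ ?_).aestronglyMeasurable
    have : (0:ℝ) ≤ n := Nat.cast_nonneg n
    linarith
  -- Step 3: integrability of all shifts
  have hint : ∀ c : ℝ, Integrable (fun ω => l (c - X ω)) μ :=
    fun c => integrable_loss_shift hmono hconv h0 hx hX (hXint 2 two_pos) c
  have hintm : ∀ c : ℝ, Integrable (fun ω => l (ηstar - X ω - c)) μ := fun c =>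
    (hint (ηstar - c)).congr (Filter.Eventually.of_forall fun ω => by congr 1; ring)
  have hintp : ∀ c : ℝ, Integrable (fun ω => l (ηstar - X ω + c)) μ := fun c =>
    (hint (ηstar + c)).congr (Filter.Eventually.of_forall fun ω => by
      congr 1; ring)
  -- slope inequalities
  have hS1 : ∀ a b : ℝ, a < b → lp a ≤ slope l a b := fun a b hab =>
    hconv.le_slope_of_hasDerivWithinAt_Ioi (mem_univ a) (mem_univ b) hab
      ((hlp a).mono Ioi_subset_Ici_self)
  have hS2 : ∀ a b : ℝ, a < b → slope l a b ≤ lm b := fun a b hab =>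
    hconv.slope_le_of_hasDerivWithinAt_Iio (mem_univ a) (mem_univ b) hab
      ((hlm b).mono Iio_subset_Iic_self)
  have hsn : ∀ n : ℕ, (0:ℝ) < 1/((n:ℝ)+1) := fun n => by positivity
  have hsn1 : ∀ n : ℕ, 1/((n:ℝ)+1) ≤ 1 := fun n => by
    rw [div_le_one (by positivity)]; linarith [Nat.cast_nonneg (α := ℝ) n]
  have hseq0 : Tendsto (fun n : ℕ => 1/((n:ℝ)+1)) atTop (𝓝 0) :=
    tendsto_one_div_add_atTop_nhds_zero_nat
  constructor
  · -- left part
    set F : ℕ → Ω → ℝ := fun n ω =>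
      ((n:ℝ)+1) * (l (ηstar - X ω) - l (ηstar - X ω - 1/((n:ℝ)+1))) with hF
    have hFeq : ∀ (n : ℕ) (ω : Ω),
        F n ω = slope l (ηstar - X ω) (ηstar - X ω - 1/((n:ℝ)+1)) := by
      intro n ω
      have hne : ((n:ℝ)+1) ≠ 0 := by positivity
      rw [hF, slope_def_field]
      field_simp
      ring
    have hFint : ∀ n, Integrable (F n) μ := fun n =>
      (((hint ηstar).sub (hintm _)).const_mul _)
    have hFle : ∀ n, (∫ ω, F n ω ∂μ) ≤ 1 := by
      intro n
      have hm := hmin (ηstar - 1/((n:ℝ)+1))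
      have hi : (∫ ω, l (ηstar - 1/((n:ℝ)+1) - X ω) ∂μ)
          = ∫ ω, l (ηstar - X ω - 1/((n:ℝ)+1)) ∂μ :=
        integral_congr_ae (Filter.Eventually.of_forall fun ω => by congr 1; ring)
      rw [hi] at hm
      have hieq : (∫ ω, F n ω ∂μ) = ((n:ℝ)+1) *
          ((∫ ω, l (ηstar - X ω) ∂μ) - ∫ ω, l (ηstar - X ω - 1/((n:ℝ)+1)) ∂μ) := by
        rw [hF, ← integral_sub (hint ηstar) (hintm _), ← integral_const_mul]
      rw [hieq]
      have h2 : (∫ ω, l (ηstar - X ω) ∂μ) - (∫ ω, l (ηstar - X ω - 1/((n:ℝ)+1)) ∂μ)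
          ≤ 1/((n:ℝ)+1) := by linarith
      calc ((n:ℝ)+1) * ((∫ ω, l (ηstar - X ω) ∂μ)
            - ∫ ω, l (ηstar - X ω - 1/((n:ℝ)+1)) ∂μ)
          ≤ ((n:ℝ)+1) * (1/((n:ℝ)+1)) :=
            mul_le_mul_of_nonneg_left h2 (by positivity)
        _ = 1 := by field_simp
    have hTend : Tendsto (fun n => ∫ ω, F n ω ∂μ) atTop
        (𝓝 (∫ ω, lm (ηstar - X ω) ∂μ)) := by
      apply tendsto_integral_of_dominated_convergence
        (bound := fun ω => |lm (ηstar - X ω)| + |l (ηstar - X ω) - l (ηstar - X ω - 1)|)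
      · exact fun n => (hFint n).aestronglyMeasurable
      · exact hlmint.abs.add ((hint ηstar).sub (hintm 1)).abs
      · intro n
        refine Filter.Eventually.of_forall fun ω => ?_
        set y := ηstar - X ω with hy
        have hs0 := hsn n
        have hs1 := hsn1 n
        have hup : F n ω ≤ lm y := by
          rw [hFeq n ω, slope_comm]
          exact hS2 _ _ (by linarith)
        have hlow : l y - l (y - 1) ≤ F n ω := by
          have hsec := hconv.secant_mono (mem_univ y) (mem_univ (y-1))
            (mem_univ (y - 1/((n:ℝ)+1))) (by intro h; rw [sub_eq_self] at h; linarith [hsn n])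
            (by intro h; rw [sub_eq_self] at h; linarith [hsn n]) (by linarith)
          rw [hFeq n ω, slope_def_field]
          have e1 : (l (y-1) - l y)/((y-1) - y) = l y - l (y - 1) := by
            rw [show (y-1) - y = (-1:ℝ) by ring]
            ring
          rw [← e1]
          exact hsec
        rw [Real.norm_eq_abs, abs_le]
        constructor
        · have h1 := neg_abs_le (l y - l (y - 1))
          have h2 := abs_nonneg (lm y)
          linarith
        · have h1 := le_abs_self (lm y)
          have h2 := abs_nonneg (l y - l (y - 1))
          linarith
      · refine Filter.Eventually.of_forall fun ω => ?_
        set y := ηstar - X ω with hy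
        have hslope := hasDerivWithinAt_iff_tendsto_slope.mp (hlm y)
        have hseq : Tendsto (fun n : ℕ => y - 1/((n:ℝ)+1)) atTop (𝓝[Iic y \ {y}] y) := by
          apply tendsto_nhdsWithin_of_tendsto_nhds_of_eventually_within
          · simpa using tendsto_const_nhds.sub hseq0
          · refine Filter.Eventually.of_forall fun n => ⟨?_, ?_⟩
            · exact mem_Iic.mpr (by linarith [hsn n])
            · simp only [mem_singleton_iff]
              intro h
              rw [sub_eq_self] at h
              linarith [hsn n]
        exact (hslope.comp hseq).congr fun n => (hFeq n ω).symm
    exact le_of_tendsto hTend (Filter.Eventually.of_forall hFle)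
  · -- right part
    set G : ℕ → Ω → ℝ := fun n ω =>
      ((n:ℝ)+1) * (l (ηstar - X ω + 1/((n:ℝ)+1)) - l (ηstar - X ω)) with hG
    have hGeq : ∀ (n : ℕ) (ω : Ω),
        G n ω = slope l (ηstar - X ω) (ηstar - X ω + 1/((n:ℝ)+1)) := by
      intro n ω
      have hne : ((n:ℝ)+1) ≠ 0 := by positivity
      rw [hG, slope_def_field]
      field_simp
      ring
    have hGint : ∀ n, Integrable (G n) μ := fun n =>
      (((hintp _).sub (hint ηstar)).const_mul _)
    have hGle : ∀ n, (1:ℝ) ≤ ∫ ω, G n ω ∂μ := by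
      intro n
      have hm := hmin (ηstar + 1/((n:ℝ)+1))
      have hi : (∫ ω, l (ηstar + 1/((n:ℝ)+1) - X ω) ∂μ)
          = ∫ ω, l (ηstar - X ω + 1/((n:ℝ)+1)) ∂μ :=
        integral_congr_ae (Filter.Eventually.of_forall fun ω => by congr 1; ring)
      rw [hi] at hm
      have hieq : (∫ ω, G n ω ∂μ) = ((n:ℝ)+1) *
          ((∫ ω, l (ηstar - X ω + 1/((n:ℝ)+1)) ∂μ) - ∫ ω, l (ηstar - X ω) ∂μ) := by
        rw [hG, ← integral_sub (hintp _) (hint ηstar), ← integral_const_mul]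
      rw [hieq]
      have h2 : 1/((n:ℝ)+1)
          ≤ (∫ ω, l (ηstar - X ω + 1/((n:ℝ)+1)) ∂μ) - ∫ ω, l (ηstar - X ω) ∂μ := by linarith
      calc (1:ℝ) = ((n:ℝ)+1) * (1/((n:ℝ)+1)) := by field_simp
        _ ≤ ((n:ℝ)+1) * ((∫ ω, l (ηstar - X ω + 1/((n:ℝ)+1)) ∂μ)
            - ∫ ω, l (ηstar - X ω) ∂μ) :=
          mul_le_mul_of_nonneg_left h2 (by positivity)
    have hTend : Tendsto (fun n => ∫ ω, G n ω ∂μ) atTop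
        (𝓝 (∫ ω, lp (ηstar - X ω) ∂μ)) := by
      apply tendsto_integral_of_dominated_convergence
        (bound := fun ω => |lp (ηstar - X ω)| + |l (ηstar - X ω + 1) - l (ηstar - X ω)|)
      · exact fun n => (hGint n).aestronglyMeasurable
      · exact hlpint.abs.add ((hintp 1).sub (hint ηstar)).abs
      · intro n
        refine Filter.Eventually.of_forall fun ω => ?_
        set y := ηstar - X ω with hy
        have hs0 := hsn n
        have hs1 := hsn1 n
        have hlow : lp y ≤ G n ω := by
          rw [hGeq n ω]
          exact hS1 _ _ (by linarith)
        have hup : G n ω ≤ l (y + 1) - l y := by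
          have hsec := hconv.secant_mono (mem_univ y) (mem_univ (y + 1/((n:ℝ)+1)))
            (mem_univ (y + 1)) (by intro h; rw [add_eq_left] at h; linarith [hsn n])
            (by intro h; rw [add_eq_left] at h; linarith [hsn n]) (by linarith)
          rw [hGeq n ω, slope_def_field]
          have e1 : (l (y+1) - l y)/((y+1) - y) = l (y + 1) - l y := by
            rw [show (y+1) - y = (1:ℝ) by ring, div_one]
          rw [← e1]
          exact hsec
        rw [Real.norm_eq_abs, abs_le]
        constructor
        · have h1 := neg_abs_le (lp y)
          have h2 := abs_nonneg (l (y + 1) - l y)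
          linarith
        · have h1 := le_abs_self (l (y + 1) - l y)
          have h2 := abs_nonneg (lp y)
          linarith
      · refine Filter.Eventually.of_forall fun ω => ?_
        set y := ηstar - X ω with hy
        have hslope := hasDerivWithinAt_iff_tendsto_slope.mp (hlp y)
        have hseq : Tendsto (fun n : ℕ => y + 1/((n:ℝ)+1)) atTop (𝓝[Ici y \ {y}] y) := by
          apply tendsto_nhdsWithin_of_tendsto_nhds_of_eventually_within
          · simpa using tendsto_const_nhds.add hseq0
          · refine Filter.Eventually.of_forall fun n => ⟨?_, ?_⟩
            · exact mem_Ici.mpr (by linarith [hsn n])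
            · simp only [mem_singleton_iff]
              intro h
              rw [add_eq_left] at h
              linarith [hsn n]
        exact (hslope.comp hseq).congr fun n => (hGeq n ω).symm
    exact ge_of_tendsto hTend (Filter.Eventually.of_forall hGle)
end

section
/- For the entropic loss function l(x) = (e^{γx} - 1)/γ with γ > 0 and a random variable X with E[e^{-γX}] < ∞, the infimum over η ∈ ℝ of E[l(η - X)] - η is attained at η* = -(1/γ) ln E[e^{-γX}], and the infimal value equals (1/γ) ln E[e^{-γX}]. -/
open MeasureTheory Real

/-- For the entropic loss `l x = (exp (γ x) - 1)/γ` and `X` with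
`0 < E[exp (-γ X)] < ∞`, the infimum of `η ↦ E[l (η - X)] - η` is attained at
`η* = -(1/γ) log E[exp (-γ X)]` and equals `(1/γ) log E[exp (-γ X)]`. -/
theorem entropic_oce
    {Ω : Type*} [MeasurableSpace Ω] (μ : Measure Ω) [IsProbabilityMeasure μ]
    (γ : ℝ) (hγ : 0 < γ)
    (X : Ω → ℝ) (hint : Integrable (fun ω => Real.exp (-γ * X ω)) μ)
    (hpos : 0 < ∫ ω, Real.exp (-γ * X ω) ∂μ) :
    (∀ η : ℝ,
      (∫ ω, (Real.exp (γ * (-(1 / γ) * Real.log (∫ ω', Real.exp (-γ * X ω') ∂μ) - X ω)) - 1) / γ ∂μ)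
          - (-(1 / γ) * Real.log (∫ ω', Real.exp (-γ * X ω') ∂μ))
        ≤ (∫ ω, (Real.exp (γ * (η - X ω)) - 1) / γ ∂μ) - η) ∧
    (⨅ η : ℝ, (∫ ω, (Real.exp (γ * (η - X ω)) - 1) / γ ∂μ) - η)
        = (1 / γ) * Real.log (∫ ω, Real.exp (-γ * X ω) ∂μ) := by
  set I : ℝ := ∫ ω, Real.exp (-γ * X ω) ∂μ with hI
  have hkey : ∀ η : ℝ, (∫ ω, (Real.exp (γ * (η - X ω)) - 1) / γ ∂μ)
      = (Real.exp (γ * η) * I - 1) / γ := by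
    intro η
    have h1 : ∀ ω, (Real.exp (γ * (η - X ω)) - 1) / γ
        = (Real.exp (γ * η) * Real.exp (-γ * X ω) - 1) / γ := by
      intro ω
      rw [← Real.exp_add]
      ring_nf
    simp_rw [h1, div_eq_mul_inv]
    rw [integral_mul_const, integral_sub ((hint.const_mul _)) (integrable_const 1),
      integral_const_mul, integral_const]
    simp [hI]
  have hexp : Real.exp (γ * (-(1 / γ) * Real.log I)) * I = 1 := by
    have : γ * (-(1 / γ) * Real.log I) = -Real.log I := by
      field_simp
    rw [this, Real.exp_neg, Real.exp_log hpos]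
    field_simp [ne_of_gt hpos]
  have hval : (∫ ω, (Real.exp (γ * (-(1 / γ) * Real.log I - X ω)) - 1) / γ ∂μ)
      - (-(1 / γ) * Real.log I) = (1 / γ) * Real.log I := by
    rw [hkey, hexp]
    ring
  have hge : ∀ η : ℝ, (1 / γ) * Real.log I
      ≤ (∫ ω, (Real.exp (γ * (η - X ω)) - 1) / γ ∂μ) - η := by
    intro η
    rw [hkey]
    have ht : γ * η + Real.log I + 1 ≤ Real.exp (γ * η + Real.log I) :=
      Real.add_one_le_exp _
    have he : Real.exp (γ * η + Real.log I) = Real.exp (γ * η) * I := by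
      rw [Real.exp_add, Real.exp_log hpos]
    rw [he] at ht
    rw [div_sub' (ne_of_gt hγ), le_div_iff₀ hγ]
    have h2 : 1 / γ * log I * γ = log I := by field_simp
    linarith
  refine ⟨fun η => hval ▸ hge η, ?_⟩
  apply le_antisymm
  · have := ciInf_le (f := fun η : ℝ =>
      (∫ ω, (Real.exp (γ * (η - X ω)) - 1) / γ ∂μ) - η)
      ⟨(1 / γ) * Real.log I, fun x hx => by
        obtain ⟨η, rfl⟩ := hx; exact hge η⟩ (-(1 / γ) * Real.log I)
    calc (⨅ η : ℝ, (∫ ω, (Real.exp (γ * (η - X ω)) - 1) / γ ∂μ) - η)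
        ≤ (∫ ω, (Real.exp (γ * (-(1 / γ) * Real.log I - X ω)) - 1) / γ ∂μ)
          - (-(1 / γ) * Real.log I) := this
      _ = (1 / γ) * Real.log I := hval
  · exact le_ciInf hge
end

section
/- Let X be an integrable random variable with upper quantile function q⁺_X(u) = inf{x : P(X ≤ x) > u}, and let l(x) = -γ₁x⁻ + γ₂x⁺ with γ₂ > 1 > γ₁ ≥ 0. Then η* = q⁺_X((1-γ₁)/(γ₂-γ₁)) minimizes η ↦ E[l(η - X)] - η. -/
open MeasureTheory Real Filter

private lemma loss_rw (γ₁ γ₂ x : ℝ) :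
    -γ₁ * max (-x) 0 + γ₂ * max x 0 = (γ₂ - γ₁) * max x 0 + γ₁ * x := by
  rcases le_total x 0 with h | h
  · rw [max_eq_left (neg_nonneg.2 h), max_eq_right h]; ring
  · rw [max_eq_right (neg_nonpos.2 h), max_eq_left h]; ring

private lemma aux_quantile
    {Ω : Type*} [MeasurableSpace Ω] (μ : Measure Ω) [IsProbabilityMeasure μ]
    (γ₁ γ₂ : ℝ) (h1 : 0 ≤ γ₁) (h2 : γ₁ < 1) (h3 : 1 < γ₂)
    (X : Ω → ℝ) (hXm : Measurable X) (hX : Integrable X μ)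
    (ηstar : ℝ)
    (hη : ηstar = sInf {x : ℝ | (1 - γ₁) / (γ₂ - γ₁) < (μ {ω | X ω ≤ x}).toReal}) :
    ∀ η : ℝ,
      (∫ ω, -γ₁ * max (-(ηstar - X ω)) 0 + γ₂ * max (ηstar - X ω) 0 ∂μ) - ηstar
        ≤ (∫ ω, -γ₁ * max (-(η - X ω)) 0 + γ₂ * max (η - X ω) 0 ∂μ) - η := by
  set c := γ₂ - γ₁ with hcdef
  have hc : 0 < c := by rw [hcdef]; linarith
  set t := (1 - γ₁) / c with htdef
  have ht0 : 0 < t := div_pos (by linarith) hc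
  have ht1 : t < 1 := (div_lt_one hc).2 (by rw [hcdef]; linarith)
  have hFmono : ∀ a b : ℝ, a ≤ b →
      (μ {ω | X ω ≤ a}).toReal ≤ (μ {ω | X ω ≤ b}).toReal := fun a b hab =>
    ENNReal.toReal_mono (measure_ne_top μ _)
      (measure_mono fun ω h => le_trans h hab)
  set S : Set ℝ := {x : ℝ | t < (μ {ω | X ω ≤ x}).toReal} with hSdef
  have hms : ∀ x : ℝ, MeasurableSet {ω | X ω ≤ x} := fun x => hXm measurableSet_Iic
  -- S is nonempty
  have hSne : S.Nonempty := by
    have hmono : Monotone (fun n : ℕ => {ω | X ω ≤ (n : ℝ)}) := by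
      intro a b hab ω h
      simp only [Set.mem_setOf_eq] at h ⊢
      exact le_trans h (by exact_mod_cast hab)
    have hXnat : (⋃ n : ℕ, {ω | X ω ≤ (n : ℝ)}) = Set.univ := by
      ext ω
      simp only [Set.mem_iUnion, Set.mem_setOf_eq, Set.mem_univ, iff_true]
      exact exists_nat_ge (X ω)
    have h4 := tendsto_measure_iUnion_atTop (μ := μ) hmono
    rw [hXnat, measure_univ] at h4
    have h5 := (ENNReal.tendsto_toReal (by norm_num : (1 : ENNReal) ≠ ⊤)).comp h4
    simp only [Function.comp, ENNReal.toReal_one] at h5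
    obtain ⟨n, hn⟩ := (h5.eventually (eventually_gt_nhds ht1)).exists
    exact ⟨(n : ℝ), hn⟩
  -- S is bounded below
  have hSbdd : BddBelow S := by
    have hAnti : Antitone (fun n : ℕ => {ω | X ω ≤ -(n : ℝ)}) := by
      intro a b hab ω h
      simp only [Set.mem_setOf_eq] at h ⊢
      exact le_trans h (neg_le_neg (Nat.cast_le.mpr hab))
    have hIemp : (⋂ n : ℕ, {ω | X ω ≤ -(n : ℝ)}) = ∅ := by
      ext ω
      simp only [Set.mem_iInter, Set.mem_setOf_eq, Set.mem_empty_iff_false, iff_false]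
      push_neg
      obtain ⟨n, hn⟩ := exists_nat_gt (-X ω)
      exact ⟨n, by linarith⟩
    have h6 := tendsto_measure_iInter_atTop (μ := μ)
      (fun n => (hms _).nullMeasurableSet) hAnti ⟨0, measure_ne_top μ _⟩
    rw [hIemp, measure_empty] at h6
    have h7 := (ENNReal.tendsto_toReal (by norm_num : (0 : ENNReal) ≠ ⊤)).comp h6
    simp only [Function.comp, ENNReal.toReal_zero] at h7
    obtain ⟨n, hn⟩ := (h7.eventually (eventually_lt_nhds ht0)).exists
    simp only [Function.comp_apply] at hn
    refine ⟨-(n : ℝ), fun x hx => ?_⟩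
    by_contra hlt
    push_neg at hlt
    have hle := hFmono _ _ hlt.le
    have hxS : t < (μ {ω | X ω ≤ x}).toReal := hx
    linarith
  -- the CDF at ηstar is at least t
  have hC : t ≤ (μ {ω | X ω ≤ ηstar}).toReal := by
    have hAnti2 : Antitone (fun n : ℕ => {ω | X ω ≤ ηstar + 1 / ((n : ℝ) + 1)}) := by
      intro a b hab ω h
      simp only [Set.mem_setOf_eq] at h ⊢
      refine le_trans h (add_le_add le_rfl (one_div_le_one_div_of_le (by positivity) ?_))
      have : (a : ℝ) ≤ (b : ℝ) := Nat.cast_le.mpr hab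
      linarith
    have hIcap : (⋂ n : ℕ, {ω | X ω ≤ ηstar + 1 / ((n : ℝ) + 1)}) = {ω | X ω ≤ ηstar} := by
      ext ω
      simp only [Set.mem_iInter, Set.mem_setOf_eq]
      constructor
      · intro h
        by_contra hlt
        push_neg at hlt
        obtain ⟨n, hn⟩ := exists_nat_one_div_lt (sub_pos.2 hlt)
        have := h n
        linarith
      · intro h n
        have : 0 < 1 / ((n : ℝ) + 1) := by positivity
        linarith
    have h7 := tendsto_measure_iInter_atTop (μ := μ)
      (fun n => (hms _).nullMeasurableSet) hAnti2 ⟨0, measure_ne_top μ _⟩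
    rw [hIcap] at h7
    have h8 := (ENNReal.tendsto_toReal (measure_ne_top μ _)).comp h7
    refine ge_of_tendsto' h8 fun n => ?_
    have hpos : ηstar < ηstar + 1 / ((n : ℝ) + 1) :=
      lt_add_of_pos_right _ (by positivity)
    have hlt : sInf S < ηstar + 1 / ((n : ℝ) + 1) := by rw [← hη]; exact hpos
    obtain ⟨x, hxS, hxlt⟩ := (csInf_lt_iff hSbdd hSne).1 hlt
    exact le_trans (le_of_lt hxS) (hFmono _ _ hxlt.le)
  -- the lower CDF at ηstar is at most t
  have hmlt : MeasurableSet {ω | X ω < ηstar} := hXm measurableSet_Iio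
  have hD : (μ {ω | X ω < ηstar}).toReal ≤ t := by
    have hmono2 : Monotone (fun n : ℕ => {ω | X ω ≤ ηstar - 1 / ((n : ℝ) + 1)}) := by
      intro a b hab ω h
      simp only [Set.mem_setOf_eq] at h ⊢
      refine le_trans h (sub_le_sub_left (one_div_le_one_div_of_le (by positivity) ?_) _)
      have : (a : ℝ) ≤ (b : ℝ) := Nat.cast_le.mpr hab
      linarith
    have hUcup : (⋃ n : ℕ, {ω | X ω ≤ ηstar - 1 / ((n : ℝ) + 1)}) = {ω | X ω < ηstar} := by
      ext ω
      simp only [Set.mem_iUnion, Set.mem_setOf_eq]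
      constructor
      · rintro ⟨n, hn⟩
        have : 0 < 1 / ((n : ℝ) + 1) := by positivity
        linarith
      · intro h
        obtain ⟨n, hn⟩ := exists_nat_one_div_lt (sub_pos.2 h)
        exact ⟨n, by linarith⟩
    have h9 := tendsto_measure_iUnion_atTop (μ := μ) hmono2
    rw [hUcup] at h9
    have h10 := (ENNReal.tendsto_toReal (measure_ne_top μ _)).comp h9
    refine le_of_tendsto' h10 fun n => ?_
    by_contra hgt
    push_neg at hgt
    have hmem : (ηstar - 1 / ((n : ℝ) + 1)) ∈ S := hgt
    have hle := csInf_le hSbdd hmem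
    rw [← hη] at hle
    have : 0 < 1 / ((n : ℝ) + 1) := by positivity
    linarith
  -- integrability
  have hI : ∀ η : ℝ, Integrable (fun ω => max (η - X ω) 0) μ := fun η =>
    ((integrable_const η).sub hX).pos_part
  have hsub : ∀ η : ℝ, Integrable (fun ω => η - X ω) μ := fun η =>
    (integrable_const η).sub hX
  have hval : ∀ η : ℝ,
      (∫ ω, -γ₁ * max (-(η - X ω)) 0 + γ₂ * max (η - X ω) 0 ∂μ)
        = c * (∫ ω, max (η - X ω) 0 ∂μ) + γ₁ * (η - ∫ ω, X ω ∂μ) := by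
    intro η
    have hptw : ∀ ω, -γ₁ * max (-(η - X ω)) 0 + γ₂ * max (η - X ω) 0
        = c * max (η - X ω) 0 + γ₁ * (η - X ω) := fun ω => loss_rw γ₁ γ₂ _
    have hA : (∫ ω, (c * max (η - X ω) 0 + γ₁ * (η - X ω)) ∂μ)
        = (∫ ω, c * max (η - X ω) 0 ∂μ) + ∫ ω, γ₁ * (η - X ω) ∂μ :=
      integral_add ((hI η).const_mul c) ((hsub η).const_mul γ₁)
    have hB : (∫ ω, c * max (η - X ω) 0 ∂μ) = c * ∫ ω, max (η - X ω) 0 ∂μ :=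
      integral_const_mul c _
    have hC2 : (∫ ω, γ₁ * (η - X ω) ∂μ) = γ₁ * (η - ∫ ω, X ω ∂μ) := by
      rw [integral_const_mul]
      congr 1
      rw [integral_sub (integrable_const η) hX, integral_const]
      simp
    rw [integral_congr_ae (Filter.Eventually.of_forall hptw), hA, hB, hC2]
  have e1 : 1 - γ₁ = c * t := by
    rw [htdef]; field_simp
  intro η
  rw [hval ηstar, hval η]
  have key : (1 - γ₁) * (η - ηstar)
      ≤ c * ((∫ ω, max (η - X ω) 0 ∂μ) - ∫ ω, max (ηstar - X ω) 0 ∂μ) := by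
    rcases le_total ηstar η with hle | hle
    · -- ηstar ≤ η
      have hind : ∀ ω, Set.indicator {ω | X ω ≤ ηstar} (fun _ => η - ηstar) ω
          ≤ max (η - X ω) 0 - max (ηstar - X ω) 0 := by
        intro ω
        by_cases h : ω ∈ {ω | X ω ≤ ηstar}
        · rw [Set.indicator_of_mem h]
          have hx : X ω ≤ ηstar := h
          rw [max_eq_left (by linarith : (0:ℝ) ≤ η - X ω),
            max_eq_left (by linarith : (0:ℝ) ≤ ηstar - X ω)]
          linarith
        · rw [Set.indicator_of_notMem h]
          have : max (ηstar - X ω) 0 ≤ max (η - X ω) 0 :=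
            max_le_max (by linarith) le_rfl
          linarith
      have hintind : ∫ ω, Set.indicator {ω | X ω ≤ ηstar} (fun _ => η - ηstar) ω ∂μ
          = (μ {ω | X ω ≤ ηstar}).toReal * (η - ηstar) := by
        rw [integral_indicator_const _ (hms ηstar)]; simp [smul_eq_mul, Measure.real]
      have h1' : (μ {ω | X ω ≤ ηstar}).toReal * (η - ηstar)
          ≤ (∫ ω, max (η - X ω) 0 ∂μ) - ∫ ω, max (ηstar - X ω) 0 ∂μ := by
        rw [← hintind, ← integral_sub (hI η) (hI ηstar)]
        exact integral_mono ((integrable_const _).indicator (hms ηstar))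
          ((hI η).sub (hI ηstar)) hind
      have h2' : t * (η - ηstar) ≤ (μ {ω | X ω ≤ ηstar}).toReal * (η - ηstar) :=
        mul_le_mul_of_nonneg_right hC (by linarith)
      calc (1 - γ₁) * (η - ηstar) = c * (t * (η - ηstar)) := by rw [e1]; ring
        _ ≤ c * ((μ {ω | X ω ≤ ηstar}).toReal * (η - ηstar)) :=
            mul_le_mul_of_nonneg_left h2' hc.le
        _ ≤ c * ((∫ ω, max (η - X ω) 0 ∂μ) - ∫ ω, max (ηstar - X ω) 0 ∂μ) :=
            mul_le_mul_of_nonneg_left h1' hc.le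
    · -- η ≤ ηstar
      have hind : ∀ ω, max (ηstar - X ω) 0 - max (η - X ω) 0
          ≤ Set.indicator {ω | X ω < ηstar} (fun _ => ηstar - η) ω := by
        intro ω
        by_cases h : ω ∈ {ω | X ω < ηstar}
        · rw [Set.indicator_of_mem h]
          have hx : X ω < ηstar := h
          have h0 : (0:ℝ) ≤ max (η - X ω) 0 := le_max_right _ _
          rcases le_total (X ω) η with h' | h'
          · rw [max_eq_left (by linarith : (0:ℝ) ≤ ηstar - X ω),
              max_eq_left (by linarith : (0:ℝ) ≤ η - X ω)]
            linarith
          · rw [max_eq_left (by linarith : (0:ℝ) ≤ ηstar - X ω)]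
            linarith
        · rw [Set.indicator_of_notMem h]
          have hx : ηstar ≤ X ω := not_lt.1 h
          have h0 : (0:ℝ) ≤ max (η - X ω) 0 := le_max_right _ _
          rw [max_eq_right (by linarith : ηstar - X ω ≤ 0)]
          linarith
      have hintind : ∫ ω, Set.indicator {ω | X ω < ηstar} (fun _ => ηstar - η) ω ∂μ
          = (μ {ω | X ω < ηstar}).toReal * (ηstar - η) := by
        rw [integral_indicator_const _ hmlt]; simp [smul_eq_mul, Measure.real]
      have h1' : (∫ ω, max (ηstar - X ω) 0 ∂μ) - ∫ ω, max (η - X ω) 0 ∂μ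
          ≤ (μ {ω | X ω < ηstar}).toReal * (ηstar - η) := by
        rw [← hintind, ← integral_sub (hI ηstar) (hI η)]
        exact integral_mono ((hI ηstar).sub (hI η))
          ((integrable_const _).indicator hmlt) hind
      have h2' : (μ {ω | X ω < ηstar}).toReal * (ηstar - η) ≤ t * (ηstar - η) :=
        mul_le_mul_of_nonneg_right hD (by linarith)
      have h3' : c * ((∫ ω, max (ηstar - X ω) 0 ∂μ) - ∫ ω, max (η - X ω) 0 ∂μ)
          ≤ c * (t * (ηstar - η)) :=
        mul_le_mul_of_nonneg_left (le_trans h1' h2') hc.le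
      have e2 : (1 - γ₁) * (η - ηstar) = -(c * (t * (ηstar - η))) := by rw [e1]; ring
      linarith
  linarith

/-- For the CV@R-type loss `l x = -γ₁ x⁻ + γ₂ x⁺` with
`γ₂ > 1 > γ₁ ≥ 0`, the upper quantile `η* = q⁺_X((1-γ₁)/(γ₂-γ₁))` minimizes
`η ↦ E[l (η - X)] - η`. -/
theorem quantile_minimizes_oce
    {Ω : Type*} [MeasurableSpace Ω] (μ : Measure Ω) [IsProbabilityMeasure μ]
    (γ₁ γ₂ : ℝ) (h1 : 0 ≤ γ₁) (h2 : γ₁ < 1) (h3 : 1 < γ₂)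
    (X : Ω → ℝ) (hX : Integrable X μ)
    (ηstar : ℝ)
    (hη : ηstar = sInf {x : ℝ | (1 - γ₁) / (γ₂ - γ₁) < (μ {ω | X ω ≤ x}).toReal}) :
    ∀ η : ℝ,
      (∫ ω, -γ₁ * max (-(ηstar - X ω)) 0 + γ₂ * max (ηstar - X ω) 0 ∂μ) - ηstar
        ≤ (∫ ω, -γ₁ * max (-(η - X ω)) 0 + γ₂ * max (η - X ω) 0 ∂μ) - η := by
  obtain ⟨Y, hYm, hXY⟩ : ∃ Y : Ω → ℝ, Measurable Y ∧ X =ᵐ[μ] Y :=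
    ⟨hX.1.mk X, hX.1.stronglyMeasurable_mk.measurable, hX.1.ae_eq_mk⟩
  have hYint : Integrable Y μ := hX.congr hXY
  have hsets : ∀ x : ℝ, μ {ω | X ω ≤ x} = μ {ω | Y ω ≤ x} := by
    intro x
    apply measure_congr
    rw [Filter.eventuallyEq_set]
    filter_upwards [hXY] with ω h
    simp [Set.mem_setOf_eq, h]
  have hη' : ηstar = sInf {x : ℝ | (1 - γ₁) / (γ₂ - γ₁) < (μ {ω | Y ω ≤ x}).toReal} := by
    rw [hη]
    congr 1
    ext x
    rw [Set.mem_setOf_eq, Set.mem_setOf_eq, hsets x]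
  have hgoal := aux_quantile μ γ₁ γ₂ h1 h2 h3 Y hYm hYint ηstar hη'
  have hIeq : ∀ η : ℝ,
      (∫ ω, -γ₁ * max (-(η - X ω)) 0 + γ₂ * max (η - X ω) 0 ∂μ)
        = ∫ ω, -γ₁ * max (-(η - Y ω)) 0 + γ₂ * max (η - Y ω) 0 ∂μ := by
    intro η
    apply integral_congr_ae
    filter_upwards [hXY] with ω h
    rw [h]
  intro η
  rw [hIeq ηstar, hIeq η]
  exact hgoal η
end

section
/- For λ ∈ (0,1) and an integrable random variable X with continuous distribution function, the optimized certainty equivalent with loss function l(x) = (1/λ)x⁺ equals CV@R_λ(X) = -(1/λ)∫₀^λ q⁺_X(s) ds. -/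
open MeasureTheory Real Set Filter Topology

section aux
variable {Ω : Type*} [MeasurableSpace Ω] {μ : Measure Ω} [IsProbabilityMeasure μ] {X : Ω → ℝ}

lemma cvar_mono (μ : Measure Ω) [IsProbabilityMeasure μ] (X : Ω → ℝ) :
    Monotone (fun x => (μ {ω | X ω ≤ x}).toReal) := by
  intro a b hab
  exact ENNReal.toReal_mono (measure_ne_top μ _)
    (measure_mono fun ω h => le_trans h hab)

lemma cvar_nonneg (μ : Measure Ω) (X : Ω → ℝ) (x : ℝ) :
    0 ≤ (μ {ω | X ω ≤ x}).toReal := ENNReal.toReal_nonneg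

lemma cvar_le_one (μ : Measure Ω) [IsProbabilityMeasure μ] (X : Ω → ℝ) (x : ℝ) :
    (μ {ω | X ω ≤ x}).toReal ≤ 1 := by
  have := prob_le_one (μ := μ) (s := {ω | X ω ≤ x})
  simpa using ENNReal.toReal_mono ENNReal.one_ne_top this

lemma cvar_tendsto_atTop (μ : Measure Ω) [IsProbabilityMeasure μ] (X : Ω → ℝ) :
    Tendsto (fun x => (μ {ω | X ω ≤ x}).toReal) atTop (𝓝 1) := by
  have hm : Monotone (fun x : ℝ => {ω | X ω ≤ x}) := fun a b hab ω h => le_trans h hab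
  have h1 := tendsto_measure_iUnion_atTop (μ := μ) hm
  have hU : (⋃ x : ℝ, {ω | X ω ≤ x}) = univ := by
    ext ω; simp only [mem_iUnion, mem_setOf_eq, mem_univ, iff_true]
    exact ⟨X ω, le_refl _⟩
  rw [hU, measure_univ] at h1
  have := (ENNReal.tendsto_toReal ENNReal.one_ne_top).comp h1
  exact this

lemma cvar_tendsto_atBot (μ : Measure Ω) [IsProbabilityMeasure μ] {X : Ω → ℝ}
    (hXm : Measurable X) :
    Tendsto (fun x => (μ {ω | X ω ≤ x}).toReal) atBot (𝓝 0) := by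
  have hm : Monotone (fun x : ℝ => {ω | X ω ≤ x}) := fun a b hab ω h => le_trans h hab
  have h1 := tendsto_measure_iInter_atBot (μ := μ)
    (fun x => (hXm measurableSet_Iic).nullMeasurableSet) hm ⟨0, measure_ne_top μ _⟩
  have hU : (⋂ x : ℝ, X ⁻¹' Iic x) = ∅ := by
    ext ω; simp only [mem_iInter, mem_preimage, mem_Iic, mem_empty_iff_false, iff_false,
      not_forall]
    exact ⟨X ω - 1, by linarith⟩
  rw [hU, measure_empty] at h1
  have := (ENNReal.tendsto_toReal ENNReal.zero_ne_top).comp h1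
  exact this

end aux

lemma pointwise_ind (x : ℝ) {a b : ℝ} (hab : a ≤ b) :
    ∫ t in a..b, (if x ≤ t then (1:ℝ) else 0)
      = max (b - x) 0 - max (a - x) 0 := by
  have hmono : Monotone (fun t : ℝ => if x ≤ t then (1:ℝ) else 0) := by
    intro s t hst
    by_cases hs : x ≤ s
    · simp [hs, le_trans hs hst]
    · by_cases ht : x ≤ t <;> simp [hs, ht]
  rcases le_or_gt x a with hxa | hax
  · have : EqOn (fun t : ℝ => if x ≤ t then (1:ℝ) else 0) (fun _ => (1:ℝ)) (uIcc a b) := by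
      intro t ht
      rw [uIcc_of_le hab] at ht
      simp [le_trans hxa ht.1]
    rw [intervalIntegral.integral_congr this, intervalIntegral.integral_const]
    rw [max_eq_left (by linarith), max_eq_left (by linarith)]
    ring_nf
  · rcases le_or_gt x b with hxb | hbx
    · have hsplit := intervalIntegral.integral_add_adjacent_intervals
        (a := a) (b := x) (c := b) (f := fun t : ℝ => if x ≤ t then (1:ℝ) else 0)
        (μ := volume)
        ((hmono.monotoneOn _).intervalIntegrable) ((hmono.monotoneOn _).intervalIntegrable)
      have h1 : (∫ t in a..x, (if x ≤ t then (1:ℝ) else 0)) = 0 := by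
        have hne : ∀ᵐ t : ℝ ∂volume, t ≠ x := by
          rw [ae_iff]; simpa using measure_singleton x
        have hcg : ∀ᵐ t ∂volume, t ∈ Set.uIoc a x → (if x ≤ t then (1:ℝ) else 0) = (fun _ => (0:ℝ)) t := by
          filter_upwards [hne] with t ht hmem
          rw [uIoc_of_le hax.le] at hmem
          rw [if_neg (by rcases hmem with ⟨_, h2⟩; exact not_le.2 (lt_of_le_of_ne h2 ht))]
        rw [intervalIntegral.integral_congr_ae hcg]
        simp
      have h2 : (∫ t in x..b, (if x ≤ t then (1:ℝ) else 0)) = b - x := by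
        have : EqOn (fun t : ℝ => if x ≤ t then (1:ℝ) else 0) (fun _ => (1:ℝ)) (uIcc x b) := by
          intro t ht
          rw [uIcc_of_le hxb] at ht
          simp [ht.1]
        rw [intervalIntegral.integral_congr this, intervalIntegral.integral_const]
        simp
      rw [← hsplit, h1, h2, max_eq_left (by linarith), max_eq_right (by linarith)]
      ring
    · have : EqOn (fun t : ℝ => if x ≤ t then (1:ℝ) else 0) (fun _ => (0:ℝ)) (uIcc a b) := by
        intro t ht
        rw [uIcc_of_le hab] at ht
        simp [not_le.2 (lt_of_le_of_lt ht.2 hbx)]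
      rw [intervalIntegral.integral_congr this]
      rw [max_eq_right (by linarith), max_eq_right (by linarith)]
      simp

lemma cvar_g_diff {Ω : Type*} [MeasurableSpace Ω] (μ : Measure Ω) [IsProbabilityMeasure μ]
    {X : Ω → ℝ} (hXm : Measurable X) (hX : Integrable X μ) {a b : ℝ} (hab : a ≤ b) :
    (∫ ω, max (b - X ω) 0 ∂μ) - (∫ ω, max (a - X ω) 0 ∂μ)
      = ∫ t in a..b, (μ {ω | X ω ≤ t}).toReal := by
  have hInt : ∀ c : ℝ, Integrable (fun ω => max (c - X ω) 0) μ := fun c => by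
    simpa using ((integrable_const c).sub hX).pos_part
  rw [← integral_sub (hInt b) (hInt a)]
  have hpt : ∀ ω, max (b - X ω) 0 - max (a - X ω) 0
      = ∫ t in a..b, (if X ω ≤ t then (1:ℝ) else 0) := fun ω => (pointwise_ind (X ω) hab).symm
  rw [integral_congr_ae (Eventually.of_forall hpt)]
  haveI hfin : IsFiniteMeasure (volume.restrict (Ioc a b)) := by
    constructor
    rw [Measure.restrict_apply_univ, Real.volume_Ioc]
    exact ENNReal.ofReal_lt_top
  have hS : MeasurableSet {p : Ω × ℝ | X p.1 ≤ p.2} :=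
    measurableSet_le (hXm.comp measurable_fst) measurable_snd
  have hmeas : Measurable (fun p : Ω × ℝ => if X p.1 ≤ p.2 then (1:ℝ) else 0) := by
    exact Measurable.ite hS measurable_const measurable_const
  have hprod : Integrable (Function.uncurry fun (ω : Ω) (t : ℝ) => if X ω ≤ t then (1:ℝ) else 0)
      (μ.prod (volume.restrict (Ioc a b))) := by
    refine (integrable_const (1:ℝ)).mono' hmeas.aestronglyMeasurable ?_
    refine Eventually.of_forall fun p => ?_
    by_cases h : X p.1 ≤ p.2 <;> simp [Function.uncurry, h]
  calc ∫ ω, (∫ t in a..b, (if X ω ≤ t then (1:ℝ) else 0)) ∂μ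
      = ∫ ω, (∫ t in Ioc a b, (if X ω ≤ t then (1:ℝ) else 0)) ∂μ := by
        congr 1; ext ω; rw [intervalIntegral.integral_of_le hab]
    _ = ∫ t in Ioc a b, (∫ ω, (if X ω ≤ t then (1:ℝ) else 0) ∂μ) := by
        exact integral_integral_swap hprod
    _ = ∫ t in Ioc a b, (μ {ω | X ω ≤ t}).toReal := by
        refine setIntegral_congr_fun measurableSet_Ioc fun t _ => ?_
        have : (fun ω => if X ω ≤ t then (1:ℝ) else 0)
            = Set.indicator {ω | X ω ≤ t} (fun _ => (1:ℝ)) := by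
          ext ω; rw [Set.indicator_apply]; rfl
        have hs : MeasurableSet {ω | X ω ≤ t} := hXm measurableSet_Iic
        rw [this, integral_indicator_const (1:ℝ) hs]
        simp
        rfl
    _ = ∫ t in a..b, (μ {ω | X ω ≤ t}).toReal := (intervalIntegral.integral_of_le hab).symm

lemma cvar_meas_lt {Ω : Type*} [MeasurableSpace Ω] (μ : Measure Ω) [IsProbabilityMeasure μ]
    {X : Ω → ℝ}
    (hcont : Continuous fun x => (μ {ω | X ω ≤ x}).toReal) (c : ℝ) :
    μ {ω | X ω < c} = ENNReal.ofReal ((μ {ω | X ω ≤ c}).toReal) := by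
  have hm : Monotone (fun n : ℕ => {ω | X ω ≤ c - 1/(n+1)}) := by
    intro m n hmn ω h
    have h1 : (1:ℝ)/(n+1) ≤ 1/(m+1) := by
      apply one_div_le_one_div_of_le (by positivity)
      exact_mod_cast by omega
    simp only [mem_setOf_eq] at h ⊢
    linarith
  have hU : (⋃ n : ℕ, {ω | X ω ≤ c - 1/(n+1)}) = {ω | X ω < c} := by
    ext ω
    simp only [mem_iUnion, mem_setOf_eq]
    constructor
    · rintro ⟨n, hn⟩
      have : (0:ℝ) < 1/(n+1) := by positivity
      linarith
    · intro h
      obtain ⟨n, hn⟩ := exists_nat_one_div_lt (show (0:ℝ) < c - X ω by linarith)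
      exact ⟨n, by push_cast at hn ⊢; linarith⟩
  have h1 := tendsto_measure_iUnion_atTop (μ := μ) hm
  rw [hU] at h1
  have hseq : Tendsto (fun n : ℕ => c - 1/(n+1:ℝ)) atTop (𝓝 c) := by
    have := tendsto_one_div_add_atTop_nhds_zero_nat (𝕜 := ℝ)
    have h2 := (tendsto_const_nhds (x := c) (f := atTop (α := ℕ))).sub this
    simpa using h2
  have h2 : Tendsto (fun n : ℕ => μ {ω | X ω ≤ c - 1/(n+1)}) atTop
      (𝓝 (ENNReal.ofReal ((μ {ω | X ω ≤ c}).toReal))) := by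
    have h3 : Tendsto (fun n : ℕ => (μ {ω | X ω ≤ c - 1/(n+1)}).toReal) atTop
        (𝓝 ((μ {ω | X ω ≤ c}).toReal)) := (hcont.tendsto c).comp hseq
    have h4 := (ENNReal.continuous_ofReal.tendsto _).comp h3
    have h5 : ∀ n : ℕ, ENNReal.ofReal ((μ {ω | X ω ≤ c - 1/(n+1)}).toReal)
        = μ {ω | X ω ≤ c - 1/(n+1)} := fun n => ENNReal.ofReal_toReal (measure_ne_top μ _)
    refine h4.congr fun n => ?_
    simpa [Function.comp] using h5 n
  exact tendsto_nhds_unique h1 h2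

lemma cvar_quantile_integral {Ω : Type*} [MeasurableSpace Ω] (μ : Measure Ω)
    [IsProbabilityMeasure μ] {X : Ω → ℝ} (hXm : Measurable X) (hX : Integrable X μ)
    (hcont : Continuous fun x => (μ {ω | X ω ≤ x}).toReal)
    {lam η : ℝ} (hlam : lam ∈ Ioo (0:ℝ) 1)
    (hη : (μ {ω | X ω ≤ η}).toReal = lam) :
    ∫ s in (0:ℝ)..lam, sInf {x : ℝ | s < (μ {ω | X ω ≤ x}).toReal}
      = lam * η - ∫ ω, max (η - X ω) 0 ∂μ := by
  set F : ℝ → ℝ := fun x => (μ {ω | X ω ≤ x}).toReal with hF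
  set q : ℝ → ℝ := fun s => sInf {x : ℝ | s < F x} with hq
  have hFmono : Monotone F := cvar_mono μ X
  have htop : Tendsto F atTop (𝓝 1) := cvar_tendsto_atTop μ X
  have hbot : Tendsto F atBot (𝓝 0) := cvar_tendsto_atBot μ hXm
  -- basic quantile facts
  have hne : ∀ s : ℝ, s < 1 → {x : ℝ | s < F x}.Nonempty := by
    intro s hs
    exact ((tendsto_order.1 htop).1 s hs).exists
  have hbdd : ∀ s : ℝ, 0 < s → BddBelow {x : ℝ | s < F x} := by
    intro s hs
    obtain ⟨a, ha⟩ := ((tendsto_order.1 hbot).2 s hs).exists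
    refine ⟨a, fun x hx => ?_⟩
    by_contra hax
    push_neg at hax
    exact absurd (lt_of_le_of_lt (hFmono hax.le) ha) (not_lt.2 (le_of_lt hx))
  have hq_le : ∀ s c : ℝ, 0 < s → s < F c → q s ≤ c := fun s c hs hsc =>
    csInf_le (hbdd s hs) hsc
  have hq_lt : ∀ s c : ℝ, s < 1 → q s < c → s < F c := by
    intro s c hs hqc
    obtain ⟨x, hx, hxc⟩ := exists_lt_of_csInf_lt (hne s hs) hqc
    exact lt_of_lt_of_le hx (hFmono hxc.le)
  have hq_le_eta : ∀ s ∈ Ioo (0:ℝ) lam, q s ≤ η := fun s hs =>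
    hq_le s η hs.1 (by rw [show F η = lam from hη]; exact hs.2)
  -- measurability of q on Ioo 0 lam
  have hqmono : MonotoneOn q (Ioo (0:ℝ) lam) := by
    intro s hs s' hs' hss'
    exact le_csInf (hne s' (lt_trans hs'.2 hlam.2)) fun x hx =>
      csInf_le (hbdd s hs.1) (lt_of_le_of_lt hss' hx)
  have hqaem : AEMeasurable q (volume.restrict (Ioo (0:ℝ) lam)) :=
    aemeasurable_restrict_of_monotoneOn measurableSet_Ioo hqmono
  have hGaem : AEMeasurable (fun s => η - q s) (volume.restrict (Ioo (0:ℝ) lam)) :=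
    aemeasurable_const.sub hqaem
  have hG_nn : 0 ≤ᵐ[volume.restrict (Ioo (0:ℝ) lam)] fun s => η - q s := by
    filter_upwards [ae_restrict_mem measurableSet_Ioo] with s hs
    have := hq_le_eta s hs
    simp only [Pi.zero_apply]
    linarith
  -- level-set measure identity
  have hlevel : ∀ t : ℝ, 0 < t →
      (volume.restrict (Ioo (0:ℝ) lam)) {s | t < η - q s}
        = μ {ω | t < max (η - X ω) 0} := by
    intro t ht
    set c : ℝ := η - t with hc
    have hcη : c < η := by simp [hc]; linarith
    have hFc_le : F c ≤ lam := by rw [← hη]; exact hFmono hcη.le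
    have hRHS : {ω | t < max (η - X ω) 0} = {ω | X ω < c} := by
      ext ω
      simp only [mem_setOf_eq, lt_max_iff]
      constructor
      · rintro (h | h)
        · simp [hc]; linarith
        · linarith
      · intro h; left; simp [hc] at h; linarith
    rw [hRHS, cvar_meas_lt μ hcont c]
    rw [Measure.restrict_apply' measurableSet_Ioo]
    have hset : {s | t < η - q s} ∩ Ioo 0 lam = {s ∈ Ioo (0:ℝ) lam | q s < c} := by
      ext s
      simp only [mem_inter_iff, mem_setOf_eq, mem_sep_iff]
      constructor
      · rintro ⟨h1, h2⟩; exact ⟨h2, by linarith⟩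
      · rintro ⟨h1, h2⟩; exact ⟨by linarith, h1⟩
    rw [hset]
    -- squeeze the volume
    have hsub1 : {s ∈ Ioo (0:ℝ) lam | q s < c} ⊆ Ioo 0 (F c) := by
      rintro s ⟨hs, hsc⟩
      exact ⟨hs.1, hq_lt s c (lt_trans hs.2 hlam.2) hsc⟩
    have hsub2 : ∀ c' : ℝ, c' < c → Ioo (0:ℝ) (F c') ⊆ {s ∈ Ioo (0:ℝ) lam | q s < c} := by
      intro c' hc' s hs
      have hFc' : F c' ≤ lam := by
        rw [← hη]; exact hFmono (by linarith)
      refine ⟨⟨hs.1, lt_of_lt_of_le hs.2 hFc'⟩, lt_of_le_of_lt (hq_le s c' hs.1 hs.2) hc'⟩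
    have hub : volume {s ∈ Ioo (0:ℝ) lam | q s < c} ≤ ENNReal.ofReal (F c) := by
      calc volume {s ∈ Ioo (0:ℝ) lam | q s < c} ≤ volume (Ioo 0 (F c)) := measure_mono hsub1
        _ = ENNReal.ofReal (F c) := by rw [Real.volume_Ioo, sub_zero]
    have hlb : ∀ c' : ℝ, c' < c → ENNReal.ofReal (F c') ≤ volume {s ∈ Ioo (0:ℝ) lam | q s < c} := by
      intro c' hc'
      calc ENNReal.ofReal (F c') = volume (Ioo (0:ℝ) (F c')) := by
            rw [Real.volume_Ioo, sub_zero]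
        _ ≤ _ := measure_mono (hsub2 c' hc')
    refine le_antisymm hub ?_
    by_contra hcon
    push_neg at hcon
    have hfin : volume {s ∈ Ioo (0:ℝ) lam | q s < c} ≠ ⊤ :=
      ne_top_of_le_ne_top ENNReal.ofReal_ne_top hub
    set r : ℝ := (volume {s ∈ Ioo (0:ℝ) lam | q s < c}).toReal with hr
    have hrFc : r < F c := by
      have h0 : (0:ℝ) ≤ F c := ENNReal.toReal_nonneg
      have h1 := (ENNReal.toReal_lt_toReal hfin ENNReal.ofReal_ne_top).2 hcon
      rwa [ENNReal.toReal_ofReal h0] at h1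
    have hnear : ∀ᶠ c' in 𝓝[<] c, r < F c' :=
      ((hcont.tendsto c).mono_left nhdsWithin_le_nhds).eventually (eventually_gt_nhds hrFc)
    obtain ⟨c', hc'r, hc'c⟩ := (hnear.and eventually_mem_nhdsWithin).exists
    have := hlb c' hc'c
    have h2 : F c' ≤ r := by
      have h3 := ENNReal.toReal_mono hfin this
      rwa [ENNReal.toReal_ofReal (cvar_nonneg μ X c')] at h3
    linarith
  -- lintegral identity
  set P := volume.restrict (Ioo (0:ℝ) lam) with hP
  have hmax_nn : 0 ≤ᵐ[μ] fun ω => max (η - X ω) 0 :=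
    Eventually.of_forall fun ω => le_max_right _ _
  have hmax_meas : AEMeasurable (fun ω => max (η - X ω) 0) μ :=
    ((measurable_const.sub hXm).max measurable_const).aemeasurable
  have hlin : ∫⁻ s, ENNReal.ofReal (η - q s) ∂P
      = ∫⁻ ω, ENNReal.ofReal (max (η - X ω) 0) ∂μ := by
    rw [lintegral_eq_lintegral_meas_lt P hG_nn hGaem,
        lintegral_eq_lintegral_meas_lt μ hmax_nn hmax_meas]
    exact setLIntegral_congr_fun measurableSet_Ioi
      (fun t ht => hlevel t ht)
  have hIntMax : Integrable (fun ω => max (η - X ω) 0) μ := by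
    simpa using ((integrable_const η).sub hX).pos_part
  have hfin2 : ∫⁻ s, ENNReal.ofReal (η - q s) ∂P < ⊤ := by
    rw [hlin]; exact hIntMax.lintegral_lt_top
  have hGint : Integrable (fun s => η - q s) P := by
    refine ⟨hGaem.aestronglyMeasurable, ?_⟩
    rw [hasFiniteIntegral_iff_ofReal hG_nn]
    exact hfin2
  have hkey : ∫ s, (η - q s) ∂P = ∫ ω, max (η - X ω) 0 ∂μ := by
    rw [integral_eq_lintegral_of_nonneg_ae hG_nn hGaem.aestronglyMeasurable,
        integral_eq_lintegral_of_nonneg_ae hmax_nn hmax_meas.aestronglyMeasurable, hlin]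
  have hPuniv : P univ = ENNReal.ofReal lam := by
    rw [hP, Measure.restrict_apply_univ, Real.volume_Ioo, sub_zero]
  have hqint : Integrable q P := by
    have h7 : Integrable (fun s => η - (η - q s)) P := (integrable_const η).sub hGint
    simpa using h7
  have h5 : ∫ s, q s ∂P = lam * η - ∫ ω, max (η - X ω) 0 ∂μ := by
    have h6 : ∫ s, (η - q s) ∂P = η * lam - ∫ s, q s ∂P := by
      rw [integral_sub (integrable_const η) hqint, integral_const, measureReal_def, hPuniv,
        ENNReal.toReal_ofReal hlam.1.le, smul_eq_mul, mul_comm]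
    rw [hkey] at h6; linarith
  calc ∫ s in (0:ℝ)..lam, q s
      = ∫ s in Ioc (0:ℝ) lam, q s := intervalIntegral.integral_of_le hlam.1.le
    _ = ∫ s, q s ∂P := by rw [hP, Measure.restrict_congr_set Ioo_ae_eq_Ioc]
    _ = lam * η - ∫ ω, max (η - X ω) 0 ∂μ := h5

theorem oce_eq_cvar_meas {Ω : Type*} [MeasurableSpace Ω] (μ : Measure Ω) [IsProbabilityMeasure μ]
    (lam : ℝ) (hlam : lam ∈ Set.Ioo (0:ℝ) 1)
    (X : Ω → ℝ) (hXm : Measurable X) (hX : Integrable X μ)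
    (hcont : Continuous (fun x : ℝ => (μ {ω | X ω ≤ x}).toReal)) :
    (⨅ η : ℝ, (∫ ω, (1 / lam) * max (η - X ω) 0 ∂μ) - η)
      = -(1 / lam) * ∫ s in (0:ℝ)..lam,
          sInf {x : ℝ | s < (μ {ω | X ω ≤ x}).toReal} := by
  have hlam0 : (0:ℝ) < lam := hlam.1
  have hFmono := cvar_mono μ X
  have htop := cvar_tendsto_atTop μ X
  have hbot := cvar_tendsto_atBot μ hXm
  -- find η with F η = lam
  obtain ⟨a, ha⟩ := ((tendsto_order.1 hbot).2 lam hlam.1).exists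
  obtain ⟨b, hb⟩ := ((tendsto_order.1 htop).1 lam hlam.2).exists
  have hab : a ≤ b := by
    by_contra h
    push_neg at h
    have := hFmono h.le
    simp only at this
    linarith
  obtain ⟨η, hηmem, hη⟩ := intermediate_value_Icc hab hcont.continuousOn ⟨ha.le, hb.le⟩
  simp only at hη
  -- minimality
  have hInt : ∀ c : ℝ, Integrable (fun ω => max (c - X ω) 0) μ := fun c => by
    simpa using ((integrable_const c).sub hX).pos_part
  have hmin : ∀ t : ℝ,
      (1/lam) * (∫ ω, max (η - X ω) 0 ∂μ) - η ≤ (1/lam) * (∫ ω, max (t - X ω) 0 ∂μ) - t := by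
    intro t
    rcases le_or_gt η t with hts | hts
    · have hdiff := cvar_g_diff μ hXm hX hts
      have hlb : lam * (t - η) ≤ ∫ s in η..t, (μ {ω | X ω ≤ s}).toReal := by
        have h1 : (∫ s in η..t, lam) ≤ ∫ s in η..t, (μ {ω | X ω ≤ s}).toReal := by
          apply intervalIntegral.integral_mono_on hts intervalIntegrable_const
            (hcont.intervalIntegrable _ _)
          intro s hs
          rw [← hη]
          exact hFmono hs.1
        rwa [intervalIntegral.integral_const, smul_eq_mul, mul_comm] at h1
      have h2 : (1/lam) * (lam * (t - η)) = t - η := by field_simp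
      have h3 : (1/lam) * (lam * (t - η)) ≤
          (1/lam) * ((∫ ω, max (t - X ω) 0 ∂μ) - (∫ ω, max (η - X ω) 0 ∂μ)) := by
        apply mul_le_mul_of_nonneg_left _ (by positivity)
        rw [hdiff]; exact hlb
      rw [h2, mul_sub] at h3
      linarith
    · have hdiff := cvar_g_diff μ hXm hX hts.le
      have hub : (∫ s in t..η, (μ {ω | X ω ≤ s}).toReal) ≤ lam * (η - t) := by
        have h1 : (∫ s in t..η, (μ {ω | X ω ≤ s}).toReal) ≤ ∫ s in t..η, lam := by
          apply intervalIntegral.integral_mono_on hts.le (hcont.intervalIntegrable _ _)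
            intervalIntegrable_const
          intro s hs
          rw [← hη]
          exact hFmono hs.2
        rwa [intervalIntegral.integral_const, smul_eq_mul, mul_comm] at h1
      have h2 : (1/lam) * (lam * (η - t)) = η - t := by field_simp
      have h3 : (1/lam) * ((∫ ω, max (η - X ω) 0 ∂μ) - (∫ ω, max (t - X ω) 0 ∂μ)) ≤
          (1/lam) * (lam * (η - t)) := by
        apply mul_le_mul_of_nonneg_left _ (by positivity)
        rw [hdiff]; exact hub
      rw [h2, mul_sub] at h3
      linarith
  -- compute the infimum
  have hrw : (fun t : ℝ => (∫ ω, (1 / lam) * max (t - X ω) 0 ∂μ) - t)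
      = fun t : ℝ => (1/lam) * (∫ ω, max (t - X ω) 0 ∂μ) - t := by
    funext t
    rw [MeasureTheory.integral_const_mul]
  have hInf : (⨅ t : ℝ, (∫ ω, (1 / lam) * max (t - X ω) 0 ∂μ) - t)
      = (1/lam) * (∫ ω, max (η - X ω) 0 ∂μ) - η := by
    rw [hrw]
    refine le_antisymm (ciInf_le ⟨(1/lam) * (∫ ω, max (η - X ω) 0 ∂μ) - η, ?_⟩ η) (le_ciInf hmin)
    rintro y ⟨t, rfl⟩
    exact hmin t
  rw [hInf, cvar_quantile_integral μ hXm hX hcont hlam hη]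
  field_simp
  ring

/-- For `λ ∈ (0,1)` and an integrable `X` with continuous distribution
function, the OCE with loss `l x = (1/λ) x⁺` equals
`CV@R_λ(X) = -(1/λ) ∫₀^λ q⁺_X(s) ds`. -/
theorem oce_eq_cvar
    {Ω : Type*} [MeasurableSpace Ω] (μ : Measure Ω) [IsProbabilityMeasure μ]
    (lam : ℝ) (hlam : lam ∈ Set.Ioo (0:ℝ) 1)
    (X : Ω → ℝ) (hX : Integrable X μ)
    (hcont : Continuous (fun x : ℝ => (μ {ω | X ω ≤ x}).toReal)) :
    (⨅ η : ℝ, (∫ ω, (1 / lam) * max (η - X ω) 0 ∂μ) - η)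
      = -(1 / lam) * ∫ s in (0:ℝ)..lam,
          sInf {x : ℝ | s < (μ {ω | X ω ≤ x}).toReal} := by
  have hXX' : X =ᵐ[μ] hX.1.mk X := hX.1.ae_eq_mk
  set X' : Ω → ℝ := hX.1.mk X with hX'def
  have hX'm : Measurable X' := hX.1.measurable_mk
  have hX' : Integrable X' μ := hX.congr hXX'
  have hset : ∀ x : ℝ, μ {ω | X ω ≤ x} = μ {ω | X' ω ≤ x} := fun x =>
    measure_congr (hXX'.mono fun ω h => by
      change (X ω ≤ x) = (X' ω ≤ x)
      rw [h])
  have hcont' : Continuous (fun x : ℝ => (μ {ω | X' ω ≤ x}).toReal) := by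
    have : (fun x : ℝ => (μ {ω | X' ω ≤ x}).toReal)
        = fun x : ℝ => (μ {ω | X ω ≤ x}).toReal := by
      funext x
      rw [hset x]
    rw [this]
    exact hcont
  have hL : (⨅ η : ℝ, (∫ ω, (1 / lam) * max (η - X ω) 0 ∂μ) - η)
      = (⨅ η : ℝ, (∫ ω, (1 / lam) * max (η - X' ω) 0 ∂μ) - η) := by
    congr 1
    funext η
    congr 1
    exact integral_congr_ae (hXX'.mono fun ω h => by simp only [h])
  rw [hL]
  simp only [hset]
  exact oce_eq_cvar_meas μ lam hlam X' hX'm hX' hcont'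
end

section
/- For the polynomial loss function l(x) = ((([1+x]⁺)^γ) - 1)/γ with integer γ > 1, the convex conjugate is given by l*(y) = ((γ-1) y^{γ/(γ-1)})/γ - y + 1/γ for y ≥ 0, and l*(y) = +∞ for y < 0. -/
open Real

/-- For the polynomial loss `l x = ((max (1+x) 0)^γ - 1)/γ` with
integer `γ ≥ 2`, the convex conjugate satisfies, for `y ≥ 0`,
`l* y = ((γ-1)/γ) y^{γ/(γ-1)} - y + 1/γ`, and `l* y = +∞` for `y < 0`. -/
theorem polynomial_conjugate (γ : ℕ) (hγ : 2 ≤ γ) :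
    (∀ y : ℝ, 0 ≤ y →
      (⨆ x : ℝ, ((x * y - ((max (1 + x) 0) ^ γ - 1) / γ : ℝ) : EReal))
        = ((((γ : ℝ) - 1) / γ * y ^ ((γ : ℝ) / ((γ : ℝ) - 1)) - y + 1 / γ : ℝ) : EReal)) ∧
    (∀ y : ℝ, y < 0 →
      (⨆ x : ℝ, ((x * y - ((max (1 + x) 0) ^ γ - 1) / γ : ℝ) : EReal)) = ⊤) := by
  have hγ0 : γ ≠ 0 := by omega
  have hp2 : (2 : ℝ) ≤ (γ : ℝ) := by exact_mod_cast hγ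
  have hp1 : (1 : ℝ) < (γ : ℝ) := by linarith
  have hpm1 : (0 : ℝ) < (γ : ℝ) - 1 := by linarith
  have hp0 : (0 : ℝ) < (γ : ℝ) := by linarith
  set p : ℝ := (γ : ℝ)
  set q : ℝ := p / (p - 1) with hq
  have hpq : p.HolderConjugate q := by
    rw [Real.holderConjugate_iff]
    constructor
    · exact hp1
    · rw [hq]; field_simp; ring
  constructor
  · intro y hy
    set c : ℝ := (p - 1) / p * y ^ q - y + 1 / p with hc
    -- upper bound
    have hub : ∀ x : ℝ, x * y - ((max (1 + x) 0) ^ γ - 1) / γ ≤ c := by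
      intro x
      set u : ℝ := max (1 + x) 0 with hu
      have hu0 : 0 ≤ u := le_max_right _ _
      have hyoung : u * y ≤ u ^ p / p + y ^ q / q :=
        Real.young_inequality_of_nonneg hu0 hy hpq
      have hupow : u ^ p = u ^ γ := Real.rpow_natCast u γ
      have hxu : x * y ≤ u * y - y := by
        have : 1 + x ≤ u := le_max_left _ _
        nlinarith
      have hqinv : 1 / q = (p - 1) / p := by
        rw [hq]; field_simp
      have : y ^ q / q = (p - 1) / p * y ^ q := by
        rw [div_eq_mul_inv, ← one_div, hqinv]; ring
      rw [hc]
      rw [hupow] at hyoung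
      rw [this] at hyoung
      have h3 : (u ^ γ - 1) / p = u ^ γ / p - 1 / p := by ring
      have h4 : x * y - (u ^ γ - 1) / (γ : ℝ) = x * y - (u ^ γ / p - 1 / p) := by
        rw [← h3]
      rw [h4]
      linarith [hyoung, hxu]
    -- attained at x₀
    set x₀ : ℝ := y ^ (1 / (p - 1)) - 1 with hx₀
    have hattain : x₀ * y - ((max (1 + x₀) 0) ^ γ - 1) / γ = c := by
      have hu0 : 0 ≤ y ^ (1 / (p - 1)) := Real.rpow_nonneg hy _
      have hmax : max (1 + x₀) 0 = y ^ (1 / (p - 1)) := by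
        rw [hx₀]; rw [max_eq_left]; ring_nf; linarith
      have hupow : (y ^ (1 / (p - 1))) ^ γ = y ^ q := by
        rw [← Real.rpow_natCast (y ^ (1 / (p - 1))) γ, ← Real.rpow_mul hy]
        congr 1
        rw [hq]; field_simp
        rfl
      have huy : y ^ (1 / (p - 1)) * y = y ^ q := by
        rcases eq_or_lt_of_le hy with h0 | h0
        · rw [← h0]
          rw [Real.zero_rpow (by positivity), Real.zero_rpow (by positivity : q ≠ 0)]
          ring
        · have h1 : (1 / (p - 1) + 1) = q := by rw [hq]; field_simp; ring
          rw [← h1, Real.rpow_add h0, Real.rpow_one]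
      rw [hmax, hupow, hc]
      have : x₀ * y = y ^ q - y := by rw [hx₀]; rw [sub_mul, one_mul, huy]
      rw [this]
      field_simp
      ring
    apply le_antisymm
    · exact iSup_le fun x => EReal.coe_le_coe_iff.mpr (hub x)
    · exact le_iSup_of_le x₀ (by rw [hattain])
  · intro y hy
    rw [iSup_eq_top]
    intro b hb
    obtain ⟨r, hbr, _⟩ := EReal.exists_between_coe_real hb
    set x : ℝ := min (-1) ((r - 1 / p) / y - 1) with hxdef
    refine ⟨x, lt_of_lt_of_le hbr ?_⟩
    rw [EReal.coe_le_coe_iff]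
    have hx1 : x ≤ -1 := min_le_left _ _
    have hmax : max (1 + x) 0 = 0 := max_eq_right (by linarith)
    rw [hmax, zero_pow hγ0]
    have hx2 : x ≤ (r - 1 / p) / y - 1 := min_le_right _ _
    have hxy : x * y ≥ r - 1 / p := by
      have h1 : x * y ≥ ((r - 1 / p) / y - 1) * y := by
        apply mul_le_mul_of_nonpos_right hx2 (le_of_lt hy)
      have hyne : y ≠ 0 := ne_of_lt hy
      have h2 : ((r - 1 / p) / y - 1) * y = (r - 1 / p) - y := by
        field_simp
      nlinarith
    have h5 : (0 - 1) / (γ : ℝ) = -(1 / p) := by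
      show (0 - 1) / p = -(1 / p); ring
    rw [h5]
    linarith
end

section
/- Let l(x) = γ₂x⁺ with γ₂ > 1, let X have a continuous distribution, and let η* satisfy P(X < η*) ≤ 1/γ₂ ≤ P(X ≤ η*). Then the directional derivative of the OCE ρ at X in direction Y, RC(X;Y) = lim_{ε↓0}(ρ(X+εY)-ρ(X))/ε, equals -γ₂ E[Y·1_{X < η*}], for any integrable Y (assuming the relevant integrability). -/
open MeasureTheory Real Filter

open Topology

set_option linter.unusedSectionVars false

namespace CvarAux

lemma pw_lower (a t : ℝ) : max a 0 + (if 0 < a then t else 0) ≤ max (a + t) 0 := by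
  by_cases h : 0 < a
  · rw [if_pos h, max_eq_left h.le]; exact le_max_left _ _
  · rw [if_neg h, add_zero, max_eq_right (not_lt.1 h)]; exact le_max_right _ _

lemma pw_upper (a t : ℝ) : max (a + t) 0 ≤ max a 0 + (if 0 < a + t then t else 0) := by
  by_cases h : 0 < a + t
  · rw [if_pos h, max_eq_left h.le]; exact add_le_add_left (le_max_left _ _) t
  · rw [if_neg h, add_zero, max_eq_right (not_lt.1 h)]
    exact le_max_right a 0

variable {Ω : Type*} [MeasurableSpace Ω] (μ : Measure Ω) [IsProbabilityMeasure μ]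

noncomputable def Fv (γ₂ : ℝ) (Z : Ω → ℝ) (η : ℝ) : ℝ :=
  (∫ ω, γ₂ * max (η - Z ω) 0 ∂μ) - η

lemma int_part {Z : Ω → ℝ} (hZ : Integrable Z μ) (η : ℝ) :
    Integrable (fun ω => max (η - Z ω) 0) μ :=
  ((integrable_const η).sub hZ).pos_part

lemma int_part' {Z : Ω → ℝ} (hZ : Integrable Z μ) (γ₂ η : ℝ) :
    Integrable (fun ω => γ₂ * max (η - Z ω) 0) μ :=
  (int_part μ hZ η).const_mul γ₂

lemma Fv_eq {γ₂ : ℝ} {Z : Ω → ℝ} (η : ℝ) :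
    Fv μ γ₂ Z η = γ₂ * (∫ ω, max (η - Z ω) 0 ∂μ) - η := by
  rw [Fv, integral_const_mul]

lemma Fv_lb1 {γ₂ : ℝ} (hγ : 0 ≤ γ₂) (Z : Ω → ℝ) (η : ℝ) : -η ≤ Fv μ γ₂ Z η := by
  rw [Fv_eq]
  have h1 : 0 ≤ ∫ ω, max (η - Z ω) 0 ∂μ :=
    integral_nonneg fun ω => le_max_right _ _
  nlinarith

lemma Fv_lb2 {γ₂ : ℝ} (hγ : 0 ≤ γ₂) {Z : Ω → ℝ} (hZ : Integrable Z μ) (η : ℝ) :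
    γ₂ * (η - ∫ ω, Z ω ∂μ) - η ≤ Fv μ γ₂ Z η := by
  rw [Fv_eq]
  have h1 : (∫ ω, (η - Z ω) ∂μ) ≤ ∫ ω, max (η - Z ω) 0 ∂μ :=
    integral_mono ((integrable_const η).sub hZ) (int_part μ hZ η) fun ω => le_max_left _ _
  have h2 : (∫ ω, (η - Z ω) ∂μ) = η - ∫ ω, Z ω ∂μ := by
    rw [integral_sub (integrable_const η) hZ, integral_const]
    simp
  nlinarith

lemma Fv_bdd {γ₂ : ℝ} (hγ : 1 < γ₂) {Z : Ω → ℝ} (hZ : Integrable Z μ) :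
    ∀ η : ℝ, min 0 (γ₂ * (0 - ∫ ω, Z ω ∂μ)) ≤ Fv μ γ₂ Z η := by
  intro η
  rcases le_or_gt η 0 with h | h
  · have := Fv_lb1 μ (by linarith : (0:ℝ) ≤ γ₂) Z η
    have : (0:ℝ) ≤ Fv μ γ₂ Z η := by linarith
    exact le_trans (min_le_left _ _) this
  · have h2 := Fv_lb2 μ (by linarith : (0:ℝ) ≤ γ₂) hZ η
    refine le_trans (min_le_right _ _) ?_
    nlinarith

lemma Fv_bddBelow {γ₂ : ℝ} (hγ : 1 < γ₂) {Z : Ω → ℝ} (hZ : Integrable Z μ) :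
    BddBelow (Set.range (Fv μ γ₂ Z)) := by
  refine ⟨min 0 (γ₂ * (0 - ∫ ω, Z ω ∂μ)), ?_⟩
  rintro x ⟨η, rfl⟩
  exact Fv_bdd μ hγ hZ η

lemma Fv_lip {γ₂ : ℝ} (hγ : 0 ≤ γ₂) {Z : Ω → ℝ} (hZ : Integrable Z μ) (η η' : ℝ) :
    |Fv μ γ₂ Z η - Fv μ γ₂ Z η'| ≤ (γ₂ + 1) * |η - η'| := by
  rw [Fv_eq, Fv_eq]
  have h1 : |(∫ ω, max (η - Z ω) 0 ∂μ) - ∫ ω, max (η' - Z ω) 0 ∂μ| ≤ |η - η'| := by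
    rw [← integral_sub (int_part μ hZ η) (int_part μ hZ η')]
    calc |∫ ω, (max (η - Z ω) 0 - max (η' - Z ω) 0) ∂μ|
        ≤ ∫ ω, |max (η - Z ω) 0 - max (η' - Z ω) 0| ∂μ := by
          simpa using norm_integral_le_integral_norm (μ := μ) fun ω => (max (η - Z ω) 0 - max (η' - Z ω) 0)
      _ ≤ ∫ ω, |η - η'| ∂μ := by
          refine integral_mono ((int_part μ hZ η).sub (int_part μ hZ η')).abs
            (integrable_const _) fun ω => ?_
          have := abs_max_sub_max_le_abs (η - Z ω) (η' - Z ω) 0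
          simpa using this
      _ = |η - η'| := by simp
  calc |γ₂ * (∫ ω, max (η - Z ω) 0 ∂μ) - η - (γ₂ * (∫ ω, max (η' - Z ω) 0 ∂μ) - η')|
      ≤ γ₂ * |(∫ ω, max (η - Z ω) 0 ∂μ) - ∫ ω, max (η' - Z ω) 0 ∂μ| + |η - η'| := by
        have habs := abs_sub_abs_le_abs_sub (η:ℝ) η'
        have := abs_mul γ₂ ((∫ ω, max (η - Z ω) 0 ∂μ) - ∫ ω, max (η' - Z ω) 0 ∂μ)
        have h3 : γ₂ * (∫ ω, max (η - Z ω) 0 ∂μ) - η - (γ₂ * (∫ ω, max (η' - Z ω) 0 ∂μ) - η')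
            = γ₂ * ((∫ ω, max (η - Z ω) 0 ∂μ) - ∫ ω, max (η' - Z ω) 0 ∂μ) - (η - η') := by ring
        rw [h3]
        calc |γ₂ * ((∫ ω, max (η - Z ω) 0 ∂μ) - ∫ ω, max (η' - Z ω) 0 ∂μ) - (η - η')|
            ≤ |γ₂ * ((∫ ω, max (η - Z ω) 0 ∂μ) - ∫ ω, max (η' - Z ω) 0 ∂μ)| + |η - η'| :=
              abs_sub _ _
          _ = γ₂ * |(∫ ω, max (η - Z ω) 0 ∂μ) - ∫ ω, max (η' - Z ω) 0 ∂μ| + |η - η'| := by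
              rw [abs_mul, abs_of_nonneg hγ]
    _ ≤ (γ₂ + 1) * |η - η'| := by nlinarith [abs_nonneg (η - η')]

lemma ind_eq (X : Ω → ℝ) (η : ℝ) (f : Ω → ℝ) :
    (fun ω => if X ω < η then f ω else 0) = Set.indicator {ω | X ω < η} f := by
  funext ω; simp [Set.indicator_apply, Set.mem_setOf_eq]

lemma int_ite {X : Ω → ℝ} (hXm : Measurable X) (η : ℝ) {f : Ω → ℝ}
    (hf : Integrable f μ) : Integrable (fun ω => if X ω < η then f ω else 0) μ := by
  rw [ind_eq]
  exact hf.indicator (measurableSet_lt hXm measurable_const)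

lemma integral_ite_const {X : Ω → ℝ} (hXm : Measurable X) (η c : ℝ) :
    (∫ ω, (if X ω < η then c else 0) ∂μ) = c * (μ {ω | X ω < η}).toReal := by
  rw [ind_eq]
  rw [integral_indicator_const c (measurableSet_lt hXm measurable_const)]
  rw [smul_eq_mul, mul_comm]
  rfl

section Subgrad

variable {γ₂ : ℝ} (hγ : 1 < γ₂) {X Y : Ω → ℝ} (hXm : Measurable X)
  (hX : Integrable X μ)

include hγ hXm hX

/-- lower subgradient inequality in η at η' -/
lemma subgrad_lower (η η' : ℝ) :
    Fv μ γ₂ X η' + (η - η') * (γ₂ * (μ {ω | X ω < η'}).toReal - 1) ≤ Fv μ γ₂ X η := by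
  have hγ0 : (0:ℝ) ≤ γ₂ := by linarith
  have key : ∀ ω, γ₂ * max (η' - X ω) 0 + (if X ω < η' then γ₂ * (η - η') else 0)
      ≤ γ₂ * max (η - X ω) 0 := by
    intro ω
    have h := pw_lower (η' - X ω) (η - η')
    have h2 : (η' - X ω) + (η - η') = η - X ω := by ring
    rw [h2] at h
    have h3 := mul_le_mul_of_nonneg_left h hγ0
    rw [mul_add] at h3
    refine le_trans (le_of_eq ?_) h3
    congr 1
    by_cases hc : X ω < η'
    · rw [if_pos hc, if_pos (by linarith [hc] : (0:ℝ) < η' - X ω)]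
    · rw [if_neg hc, if_neg (by intro h'; exact hc (by linarith)), mul_zero]
  have hint1 : Integrable (fun ω => γ₂ * max (η' - X ω) 0
      + (if X ω < η' then γ₂ * (η - η') else 0)) μ :=
    (int_part' μ hX γ₂ η').add (int_ite μ hXm η' (integrable_const _))
  have hmono := integral_mono hint1 (int_part' μ hX γ₂ η) key
  rw [integral_add (int_part' μ hX γ₂ η') (int_ite μ hXm η' (integrable_const _)),
    integral_ite_const μ hXm] at hmono
  rw [Fv, Fv]
  nlinarith [hmono]

/-- upper subgradient inequality in η at η' -/
lemma subgrad_upper (η η' : ℝ) :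
    Fv μ γ₂ X η ≤ Fv μ γ₂ X η' + (η - η') * (γ₂ * (μ {ω | X ω < η}).toReal - 1) := by
  have hγ0 : (0:ℝ) ≤ γ₂ := by linarith
  have key : ∀ ω, γ₂ * max (η - X ω) 0
      ≤ γ₂ * max (η' - X ω) 0 + (if X ω < η then γ₂ * (η - η') else 0) := by
    intro ω
    have h := pw_upper (η' - X ω) (η - η')
    have h2 : (η' - X ω) + (η - η') = η - X ω := by ring
    rw [h2] at h
    have h3 := mul_le_mul_of_nonneg_left h hγ0
    rw [mul_add] at h3
    refine le_trans h3 (le_of_eq ?_)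
    congr 1
    by_cases hc : X ω < η
    · rw [if_pos hc, if_pos (by linarith [hc] : (0:ℝ) < η - X ω)]
    · rw [if_neg (by intro h'; exact hc (by linarith)), if_neg hc, mul_zero]
  have hint1 : Integrable (fun ω => γ₂ * max (η' - X ω) 0
      + (if X ω < η then γ₂ * (η - η') else 0)) μ :=
    (int_part' μ hX γ₂ η').add (int_ite μ hXm η (integrable_const _))
  have hmono := integral_mono (int_part' μ hX γ₂ η) hint1 key
  rw [integral_add (int_part' μ hX γ₂ η') (int_ite μ hXm η (integrable_const _)),
    integral_ite_const μ hXm] at hmono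
  rw [Fv, Fv]
  nlinarith [hmono]

/-- lower bound in the ε direction -/
lemma eps_lower (hY : Integrable Y μ) (ε η : ℝ) :
    Fv μ γ₂ X η + ε * (-γ₂ * ∫ ω, (if X ω < η then Y ω else 0) ∂μ)
      ≤ Fv μ γ₂ (fun ω => X ω + ε * Y ω) η := by
  have hγ0 : (0:ℝ) ≤ γ₂ := by linarith
  have key : ∀ ω, γ₂ * max (η - X ω) 0 + γ₂ * (if X ω < η then -(ε * Y ω) else 0)
      ≤ γ₂ * max (η - (X ω + ε * Y ω)) 0 := by
    intro ω
    have h := pw_lower (η - X ω) (-(ε * Y ω))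
    have h2 : (η - X ω) + -(ε * Y ω) = η - (X ω + ε * Y ω) := by ring
    rw [h2] at h
    have h3 := mul_le_mul_of_nonneg_left h hγ0
    rw [mul_add] at h3
    refine le_trans (le_of_eq ?_) h3
    congr 2
    by_cases hc : X ω < η
    · rw [if_pos hc, if_pos (by linarith [hc] : (0:ℝ) < η - X ω)]
    · rw [if_neg hc, if_neg (by intro h'; exact hc (by linarith))]
  have hite : Integrable (fun ω => if X ω < η then -(ε * Y ω) else 0) μ :=
    int_ite μ hXm η (((hY.const_mul ε)).neg)
  have hint1 : Integrable (fun ω => γ₂ * max (η - X ω) 0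
      + γ₂ * (if X ω < η then -(ε * Y ω) else 0)) μ :=
    (int_part' μ hX γ₂ η).add (hite.const_mul γ₂)
  have hZ : Integrable (fun ω => X ω + ε * Y ω) μ := hX.add (hY.const_mul ε)
  have hmono := integral_mono hint1 (int_part' μ hZ γ₂ η) key
  rw [integral_add (int_part' μ hX γ₂ η) (hite.const_mul γ₂)] at hmono
  simp only [integral_const_mul] at hmono
  have hrw : (fun ω => if X ω < η then -(ε * Y ω) else 0)
      = fun ω => (-ε) * (if X ω < η then Y ω else 0) := by
    funext ω
    by_cases hc : X ω < η
    · rw [if_pos hc, if_pos hc]; ring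
    · rw [if_neg hc, if_neg hc]; ring
  rw [hrw, integral_const_mul] at hmono
  rw [Fv_eq, Fv_eq]
  have hring : ε * (-γ₂ * ∫ ω, (if X ω < η then Y ω else 0) ∂μ)
      = γ₂ * (-ε * ∫ ω, (if X ω < η then Y ω else 0) ∂μ) := by ring
  rw [hring]
  linarith [hmono]

/-- upper bound in the ε direction -/
lemma eps_upper (hY : Integrable Y μ) (hYm : Measurable Y) (ε η : ℝ) :
    Fv μ γ₂ (fun ω => X ω + ε * Y ω) η
      ≤ Fv μ γ₂ X η + ε * (-γ₂ * ∫ ω, (if X ω + ε * Y ω < η then Y ω else 0) ∂μ) := by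
  have hγ0 : (0:ℝ) ≤ γ₂ := by linarith
  have hZm : Measurable (fun ω => X ω + ε * Y ω) := hXm.add (hYm.const_mul ε)
  have key : ∀ ω, γ₂ * max (η - (X ω + ε * Y ω)) 0
      ≤ γ₂ * max (η - X ω) 0 + γ₂ * (if X ω + ε * Y ω < η then -(ε * Y ω) else 0) := by
    intro ω
    have h := pw_upper (η - X ω) (-(ε * Y ω))
    have h2 : (η - X ω) + -(ε * Y ω) = η - (X ω + ε * Y ω) := by ring
    rw [h2] at h
    have h3 := mul_le_mul_of_nonneg_left h hγ0
    rw [mul_add] at h3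
    refine le_trans h3 (le_of_eq ?_)
    congr 2
    by_cases hc : X ω + ε * Y ω < η
    · rw [if_pos hc, if_pos (by linarith [hc] : (0:ℝ) < η - (X ω + ε * Y ω))]
    · rw [if_neg (by intro h'; exact hc (by linarith)), if_neg hc]
  have hite : Integrable (fun ω => if X ω + ε * Y ω < η then -(ε * Y ω) else 0) μ :=
    int_ite μ hZm η (((hY.const_mul ε)).neg)
  have hZ : Integrable (fun ω => X ω + ε * Y ω) μ := hX.add (hY.const_mul ε)
  have hint1 : Integrable (fun ω => γ₂ * max (η - X ω) 0
      + γ₂ * (if X ω + ε * Y ω < η then -(ε * Y ω) else 0)) μ :=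
    (int_part' μ hX γ₂ η).add (hite.const_mul γ₂)
  have hmono := integral_mono (int_part' μ hZ γ₂ η) hint1 key
  rw [integral_add (int_part' μ hX γ₂ η) (hite.const_mul γ₂)] at hmono
  simp only [integral_const_mul] at hmono
  have hrw : (fun ω => if X ω + ε * Y ω < η then -(ε * Y ω) else 0)
      = fun ω => (-ε) * (if X ω + ε * Y ω < η then Y ω else 0) := by
    funext ω
    by_cases hc : X ω + ε * Y ω < η
    · rw [if_pos hc, if_pos hc]; ring
    · rw [if_neg hc, if_neg hc]; ring
  rw [hrw, integral_const_mul] at hmono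
  rw [Fv_eq, Fv_eq]
  have hring : ε * (-γ₂ * ∫ ω, (if X ω + ε * Y ω < η then Y ω else 0) ∂μ)
      = γ₂ * (-ε * ∫ ω, (if X ω + ε * Y ω < η then Y ω else 0) ∂μ) := by ring
  rw [hring]
  linarith [hmono]

end Subgrad

section DCT

variable {X Y : Ω → ℝ} (hXm : Measurable X) (hYm : Measurable Y) (hY : Integrable Y μ)

include hXm hYm hY in
lemma tendsto_upper {ηs : ℝ} (h0 : μ {ω | X ω = ηs} = 0) :
    Tendsto (fun ε : ℝ => ∫ ω, (if X ω + ε * Y ω < ηs then Y ω else 0) ∂μ) (𝓝[>] (0:ℝ))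
      (𝓝 (∫ ω, (if X ω < ηs then Y ω else 0) ∂μ)) := by
  apply tendsto_integral_filter_of_dominated_convergence (fun ω => |Y ω|)
  · refine Eventually.of_forall fun ε => ?_
    have hs : MeasurableSet {ω | X ω + ε * Y ω < ηs} :=
      measurableSet_lt (hXm.add (hYm.const_mul ε)) measurable_const
    exact (Measurable.ite hs hYm measurable_const).aestronglyMeasurable
  · refine Eventually.of_forall fun ε => Eventually.of_forall fun ω => ?_
    by_cases hc : X ω + ε * Y ω < ηs
    · rw [if_pos hc]; exact le_of_eq (Real.norm_eq_abs _)
    · rw [if_neg hc]; simpa using abs_nonneg (Y ω)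
  · exact hY.abs
  · have hne : ∀ᵐ ω ∂μ, X ω ≠ ηs := by
      have := measure_eq_zero_iff_ae_notMem.mp h0
      simpa using this
    filter_upwards [hne] with ω hω
    rcases lt_or_gt_of_ne hω with hlt | hgt
    · rw [if_pos hlt]
      refine tendsto_const_nhds.congr' ?_
      have hε₀ : (0:ℝ) < (ηs - X ω) / (|Y ω| + 1) := by
        have hpos : (0:ℝ) < ηs - X ω := by linarith
        positivity
      filter_upwards [Ioo_mem_nhdsGT_of_mem (Set.mem_Ico.2 ⟨le_refl (0:ℝ), hε₀⟩)] with ε hε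
      have h1 := (lt_div_iff₀ (by positivity : (0:ℝ) < |Y ω| + 1)).1 hε.2
      rw [if_pos]
      nlinarith [le_abs_self (Y ω), abs_nonneg (Y ω), hε.1.le]
    · rw [if_neg (not_lt.2 hgt.le)]
      refine tendsto_const_nhds.congr' ?_
      have hε₀ : (0:ℝ) < (X ω - ηs) / (|Y ω| + 1) := by
        have : (0:ℝ) < X ω - ηs := by linarith [hgt]
        positivity
      filter_upwards [Ioo_mem_nhdsGT_of_mem (Set.mem_Ico.2 ⟨le_refl (0:ℝ), hε₀⟩)] with ε hε
      have h1 := (lt_div_iff₀ (by positivity : (0:ℝ) < |Y ω| + 1)).1 hε.2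
      rw [if_neg]
      push_neg
      nlinarith [neg_abs_le (Y ω), abs_nonneg (Y ω), hε.1.le]

include hXm hYm hY in
lemma tendsto_D {t : ℕ → ℝ} {ηbar : ℝ} (h0 : μ {ω | X ω = ηbar} = 0)
    (ht : Tendsto t atTop (𝓝 ηbar)) :
    Tendsto (fun n => ∫ ω, (if X ω < t n then Y ω else 0) ∂μ) atTop
      (𝓝 (∫ ω, (if X ω < ηbar then Y ω else 0) ∂μ)) := by
  apply tendsto_integral_filter_of_dominated_convergence (fun ω => |Y ω|)
  · refine Eventually.of_forall fun n => ?_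
    have hs : MeasurableSet {ω | X ω < t n} := measurableSet_lt hXm measurable_const
    exact (Measurable.ite hs hYm measurable_const).aestronglyMeasurable
  · refine Eventually.of_forall fun n => Eventually.of_forall fun ω => ?_
    by_cases hc : X ω < t n
    · rw [if_pos hc]; exact le_of_eq (Real.norm_eq_abs _)
    · rw [if_neg hc]; simpa using abs_nonneg (Y ω)
  · exact hY.abs
  · have hne : ∀ᵐ ω ∂μ, X ω ≠ ηbar := by
      have := measure_eq_zero_iff_ae_notMem.mp h0
      simpa using this
    filter_upwards [hne] with ω hω
    rcases lt_or_gt_of_ne hω with hlt | hgt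
    · rw [if_pos hlt]
      refine tendsto_const_nhds.congr' ?_
      filter_upwards [ht.eventually (eventually_gt_nhds hlt)] with n hn
      rw [if_pos hn]
    · rw [if_neg (not_lt.2 hgt.le)]
      refine tendsto_const_nhds.congr' ?_
      filter_upwards [ht.eventually (eventually_lt_nhds hgt)] with n hn
      rw [if_neg (not_lt.2 hn.le)]

end DCT

section Min

variable {γ₂ : ℝ} (hγ : 1 < γ₂) {X Y : Ω → ℝ} (hXm : Measurable X) (hX : Integrable X μ)

include hγ hXm hX in
lemma p_eq_on_mid {a b : ℝ} (ha : ∀ η', Fv μ γ₂ X a ≤ Fv μ γ₂ X η')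
    (hb : ∀ η', Fv μ γ₂ X b ≤ Fv μ γ₂ X η') {η : ℝ} (haη : a < η) (hηb : η < b) :
    (μ {ω | X ω < η}).toReal = 1 / γ₂ := by
  have h1 := subgrad_upper μ hγ hXm hX η b
  have h2 := hb η
  have hle : γ₂ * (μ {ω | X ω < η}).toReal - 1 ≤ 0 := by
    nlinarith [h1, h2]
  have h3 := subgrad_lower μ hγ hXm hX a η
  have h4 := ha η
  have hge : 0 ≤ γ₂ * (μ {ω | X ω < η}).toReal - 1 := by
    nlinarith [h3, h4]
  have : γ₂ * (μ {ω | X ω < η}).toReal = 1 := by linarith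
  field_simp
  linarith

include hγ hXm hX in
lemma null_mid {a b : ℝ} (hab : a < b) (ha : ∀ η', Fv μ γ₂ X a ≤ Fv μ γ₂ X η')
    (hb : ∀ η', Fv μ γ₂ X b ≤ Fv μ γ₂ X η')
    (hatomless : ∀ x : ℝ, μ {ω | X ω = x} = 0) :
    μ {ω | a ≤ X ω ∧ X ω < b} = 0 := by
  -- step (i): middle strips are null
  have hstrip : ∀ η₁ η₂ : ℝ, a < η₁ → η₁ < η₂ → η₂ < b →
      μ {ω | η₁ ≤ X ω ∧ X ω < η₂} = 0 := by
    intro η₁ η₂ h1 h12 h2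
    have hp1 : (μ {ω | X ω < η₁}).toReal = 1 / γ₂ :=
      p_eq_on_mid μ hγ hXm hX ha hb h1 (h12.trans h2)
    have hp2 : (μ {ω | X ω < η₂}).toReal = 1 / γ₂ :=
      p_eq_on_mid μ hγ hXm hX ha hb (h1.trans h12) h2
    have hsm : MeasurableSet {ω | η₁ ≤ X ω ∧ X ω < η₂} :=
      (measurableSet_le measurable_const hXm).inter (measurableSet_lt hXm measurable_const)
    have hdisj : Disjoint {ω | X ω < η₁} {ω | η₁ ≤ X ω ∧ X ω < η₂} := by
      rw [Set.disjoint_left]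
      intro ω hω1 hω2
      exact absurd hω2.1 (not_le.2 hω1)
    have hun : {ω | X ω < η₂} = {ω | X ω < η₁} ∪ {ω | η₁ ≤ X ω ∧ X ω < η₂} := by
      ext ω
      simp only [Set.mem_setOf_eq, Set.mem_union]
      constructor
      · intro h
        rcases lt_or_ge (X ω) η₁ with h' | h'
        · exact Or.inl h'
        · exact Or.inr ⟨h', h⟩
      · rintro (h | h)
        · exact h.trans h12
        · exact h.2
    have hmu : μ {ω | X ω < η₂} = μ {ω | X ω < η₁} + μ {ω | η₁ ≤ X ω ∧ X ω < η₂} := by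
      rw [hun, measure_union hdisj hsm]
    have hfin1 : μ {ω | X ω < η₁} ≠ ⊤ := measure_ne_top μ _
    have hfin2 : μ {ω | X ω < η₂} ≠ ⊤ := measure_ne_top μ _
    have heq : μ {ω | X ω < η₂} = μ {ω | X ω < η₁} :=
      (ENNReal.toReal_eq_toReal_iff' hfin2 hfin1).1 (by rw [hp1, hp2])
    rw [heq] at hmu
    have := (ENNReal.add_right_inj hfin1).1 (by rw [← hmu, add_zero] :
      μ {ω | X ω < η₁} + 0 = μ {ω | X ω < η₁} + μ {ω | η₁ ≤ X ω ∧ X ω < η₂})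
    exact this.symm
  -- step (ii): open middle interval is null
  have hopen : μ {ω | a < X ω ∧ X ω < b} = 0 := by
    have hsub : {ω | a < X ω ∧ X ω < b} ⊆
        ⋃ n : ℕ, {ω | a + (b - a)/(n + 3) ≤ X ω ∧ X ω < b - (b - a)/(n + 3)} := by
      intro ω hω
      obtain ⟨hax, hxb⟩ := hω
      set x := X ω
      have hm : (0:ℝ) < min (x - a) ((b - x)/2) := by
        apply lt_min <;> linarith
      obtain ⟨n, hn⟩ := exists_nat_gt ((b - a) / min (x - a) ((b - x)/2))
      refine Set.mem_iUnion.2 ⟨n, ?_, ?_⟩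
      · have h1 : (b - a) < min (x - a) ((b - x)/2) * (n + 3) := by
          have h2 := (div_lt_iff₀ hm).1 (hn.trans (by norm_num : (n:ℝ) < n + 3))
          linarith [h2]
        have h3 : (b - a)/((n:ℝ) + 3) < min (x - a) ((b - x)/2) := by
          rw [div_lt_iff₀ (by positivity)]
          linarith
        have h4 : min (x - a) ((b - x)/2) ≤ x - a := min_le_left _ _
        show a + (b - a)/((n:ℝ) + 3) ≤ x
        linarith
      · have h1 : (b - a) < min (x - a) ((b - x)/2) * (n + 3) := by
          have h2 := (div_lt_iff₀ hm).1 (hn.trans (by norm_num : (n:ℝ) < n + 3))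
          linarith [h2]
        have h3 : (b - a)/((n:ℝ) + 3) < min (x - a) ((b - x)/2) := by
          rw [div_lt_iff₀ (by positivity)]
          linarith
        have h4 : min (x - a) ((b - x)/2) ≤ (b - x)/2 := min_le_right _ _
        show x < b - (b - a)/((n:ℝ) + 3)
        linarith
    refine measure_mono_null hsub (measure_iUnion_null fun n => ?_)
    have hba : (0:ℝ) < b - a := by linarith
    have hq : (0:ℝ) < (b - a)/((n:ℝ) + 3) := by positivity
    have hhalf : (b - a)/((n:ℝ) + 3) ≤ (b - a)/3 := by
      apply div_le_div_of_nonneg_left (by linarith) (by norm_num) (by norm_num)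
    exact hstrip _ _ (by linarith) (by nlinarith) (by linarith)
  -- step (iii)
  have hsub : {ω | a ≤ X ω ∧ X ω < b} ⊆ {ω | X ω = a} ∪ {ω | a < X ω ∧ X ω < b} := by
    intro ω hω
    rcases eq_or_lt_of_le hω.1 with h | h
    · exact Or.inl h.symm
    · exact Or.inr ⟨h, hω.2⟩
  exact measure_mono_null hsub (measure_union_null (hatomless a) hopen)

include hγ hXm hX in
lemma ite_ae_eq {a b : ℝ} (hab : a < b) (ha : ∀ η', Fv μ γ₂ X a ≤ Fv μ γ₂ X η')
    (hb : ∀ η', Fv μ γ₂ X b ≤ Fv μ γ₂ X η')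
    (hatomless : ∀ x : ℝ, μ {ω | X ω = x} = 0) (Y : Ω → ℝ) :
    (fun ω => if X ω < a then Y ω else 0) =ᵐ[μ] (fun ω => if X ω < b then Y ω else 0) := by
  have hnull := null_mid μ hγ hXm hX hab ha hb hatomless
  filter_upwards [measure_eq_zero_iff_ae_notMem.mp hnull] with ω hω
  simp only [Set.mem_setOf_eq, not_and, not_lt] at hω
  by_cases hc : X ω < a
  · rw [if_pos hc, if_pos (hc.trans hab)]
  · rw [if_neg hc]
    rw [if_neg]
    intro h
    exact absurd (hω (not_lt.1 hc)) (not_le.2 h)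

end Min

theorem cvar_aux {Ω : Type*} [MeasurableSpace Ω] (μ : Measure Ω) [IsProbabilityMeasure μ]
    (γ₂ : ℝ) (hγ : 1 < γ₂)
    (X Y : Ω → ℝ) (hXm : Measurable X) (hYm : Measurable Y)
    (hX : Integrable X μ) (hY : Integrable Y μ)
    (hatomless : ∀ x : ℝ, μ {ω | X ω = x} = 0)
    (ηstar : ℝ) (hp : (μ {ω | X ω < ηstar}).toReal = 1 / γ₂) :
    Tendsto
      (fun ε : ℝ =>
        ((⨅ η : ℝ, Fv μ γ₂ (fun ω => X ω + ε * Y ω) η) - (⨅ η : ℝ, Fv μ γ₂ X η)) / ε)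
      (𝓝[>] (0:ℝ))
      (𝓝 (-γ₂ * ∫ ω, (if X ω < ηstar then Y ω else 0) ∂μ)) := by
  have hγ0 : (0:ℝ) < γ₂ := by linarith
  set D : ℝ → ℝ := fun η => -γ₂ * ∫ ω, (if X ω < η then Y ω else 0) ∂μ with hDdef
  set L : ℝ := D ηstar with hLdef
  set g0 : ℝ := ⨅ η : ℝ, Fv μ γ₂ X η with hg0def
  -- ηstar is a minimizer
  have hstar0 : γ₂ * (μ {ω | X ω < ηstar}).toReal - 1 = 0 := by
    rw [hp]; field_simp; norm_num
  have hminstar : ∀ η, Fv μ γ₂ X ηstar ≤ Fv μ γ₂ X η := by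
    intro η
    have h := subgrad_lower μ hγ hXm hX η ηstar
    rw [hstar0, mul_zero, add_zero] at h
    exact h
  have hg0 : g0 = Fv μ γ₂ X ηstar :=
    le_antisymm (ciInf_le (Fv_bddBelow μ hγ hX) ηstar) (le_ciInf hminstar)
  -- bound on D
  set M : ℝ := γ₂ * ∫ ω, |Y ω| ∂μ with hMdef
  have hM0 : 0 ≤ M := by
    have : 0 ≤ ∫ ω, |Y ω| ∂μ := integral_nonneg fun ω => abs_nonneg _
    positivity
  have hDbound : ∀ η, |D η| ≤ M := by
    intro η
    rw [hDdef]
    simp only [abs_mul, abs_neg, abs_of_pos hγ0]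
    rw [hMdef]
    refine mul_le_mul_of_nonneg_left ?_ hγ0.le
    refine le_trans (by simpa [Real.norm_eq_abs] using
      norm_integral_le_integral_norm (μ := μ) fun ω => (if X ω < η then Y ω else 0)) ?_
    refine integral_mono (int_ite μ hXm η hY).abs hY.abs fun ω => ?_
    by_cases hc : X ω < η
    · rw [if_pos hc]
    · rw [if_neg hc]; simpa using abs_nonneg (Y ω)
  -- Claim C
  have hclaim : ∀ ρ : ℝ, 0 < ρ → ∃ δ : ℝ, 0 < δ ∧
      ∀ η, Fv μ γ₂ X η ≤ Fv μ γ₂ X ηstar + δ → L - ρ ≤ D η := by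
    intro ρ hρ
    by_contra hcon
    push_neg at hcon
    have hseq : ∀ δ : ℝ, 0 < δ → ∃ η, Fv μ γ₂ X η ≤ Fv μ γ₂ X ηstar + δ ∧ D η < L - ρ := by
      intro δ hδ
      obtain ⟨η, h1, h2⟩ := hcon δ hδ
      exact ⟨η, h1, by linarith⟩
    set t : ℕ → ℝ := fun n => (hseq (1/(n+1)) (by positivity)).choose with htdef
    have ht : ∀ n : ℕ, Fv μ γ₂ X (t n) ≤ Fv μ γ₂ X ηstar + 1/(n+1) ∧ D (t n) < L - ρ :=
      fun n => (hseq (1/(n+1)) (by positivity)).choose_spec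
    set A : ℝ := -(Fv μ γ₂ X ηstar + 1) with hAdef
    set B : ℝ := (Fv μ γ₂ X ηstar + 1 + γ₂ * ∫ ω, X ω ∂μ)/(γ₂ - 1) with hBdef
    have hmem : ∀ n, t n ∈ Set.Icc A B := by
      intro n
      have h1 : Fv μ γ₂ X (t n) ≤ Fv μ γ₂ X ηstar + 1 := by
        refine (ht n).1.trans (add_le_add_right ?_ _)
        rw [div_le_one (by positivity)]
        norm_num
      constructor
      · have := Fv_lb1 μ hγ0.le X (t n)
        rw [hAdef]; linarith
      · have := Fv_lb2 μ hγ0.le hX (t n)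
        rw [hBdef, le_div_iff₀ (by linarith : (0:ℝ) < γ₂ - 1)]
        nlinarith
    obtain ⟨ηbar, _, φ, hφ, hconv⟩ := (isCompact_Icc).tendsto_subseq hmem
    -- ηbar is a minimizer
    have hmin_bar : ∀ η, Fv μ γ₂ X ηbar ≤ Fv μ γ₂ X η := by
      have hkey : Fv μ γ₂ X ηbar - Fv μ γ₂ X ηstar ≤ 0 := by
        have hb : ∀ n : ℕ, Fv μ γ₂ X ηbar - Fv μ γ₂ X ηstar
            ≤ 1/((n:ℝ)+1) + (γ₂+1) * |ηbar - t (φ n)| := by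
          intro n
          have hl := Fv_lip μ hγ0.le hX ηbar (t (φ n))
          have h2 := (ht (φ n)).1
          have h3 : 1/((φ n : ℝ)+1) ≤ 1/((n:ℝ)+1) := by
            apply div_le_div_of_nonneg_left (by norm_num) (by positivity)
            have : (n:ℝ) ≤ (φ n : ℝ) := by exact_mod_cast hφ.le_apply
            linarith
          have h4 := abs_le.1 hl
          linarith [h4.2]
        have htend : Tendsto (fun n : ℕ => 1/((n:ℝ)+1) + (γ₂+1) * |ηbar - t (φ n)|)
            atTop (𝓝 0) := by
          have t1 : Tendsto (fun n : ℕ => 1/((n:ℝ)+1)) atTop (𝓝 0) :=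
            tendsto_one_div_add_atTop_nhds_zero_nat
          have t2 : Tendsto (fun n : ℕ => (γ₂+1) * |ηbar - t (φ n)|) atTop (𝓝 0) := by
            have h5 : Tendsto (fun n : ℕ => ηbar - t (φ n)) atTop (𝓝 (ηbar - ηbar)) :=
              tendsto_const_nhds.sub hconv
            rw [sub_self] at h5
            simpa using (h5.abs.const_mul (γ₂+1))
          simpa using t1.add t2
        exact ge_of_tendsto' htend hb
      intro η
      linarith [hminstar η, hkey]
    -- D ηbar = L
    have hDeq : D ηbar = L := by
      rcases lt_trichotomy ηbar ηstar with h | h | h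
      · rw [hDdef, hLdef, hDdef]
        exact congrArg (fun z => -γ₂ * z)
          (integral_congr_ae (ite_ae_eq μ hγ hXm hX h hmin_bar hminstar hatomless Y))
      · rw [h]
      · rw [hDdef, hLdef, hDdef]
        exact congrArg (fun z => -γ₂ * z)
          (integral_congr_ae (ite_ae_eq μ hγ hXm hX h hminstar hmin_bar hatomless Y)).symm
    -- contradiction via continuity of D along the subsequence
    have hcont : Tendsto (fun n => D (t (φ n))) atTop (𝓝 (D ηbar)) := by
      rw [hDdef]
      exact (tendsto_D μ hXm hYm hY (hatomless ηbar) hconv).const_mul (-γ₂)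
    have hle : D ηbar ≤ L - ρ :=
      le_of_tendsto hcont (Eventually.of_forall fun n => (ht (φ n)).2.le)
    rw [hDeq] at hle
    linarith
  -- conclude via order-topology characterization
  have hLc : L = -γ₂ * ∫ ω, (if X ω < ηstar then Y ω else 0) ∂μ := rfl
  rw [tendsto_order]
  constructor
  · intro c hc
    rw [← hLc] at hc
    obtain ⟨δ, hδ, hδ'⟩ := hclaim ((L - c)/2) (by linarith)
    set ρ : ℝ := (L - c)/2 with hρdef
    have hρ : (0:ℝ) < ρ := by rw [hρdef]; linarith
    set K : ℝ := M + |L| + ρ + 1 with hKdef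
    have hK : (0:ℝ) < K := by rw [hKdef]; positivity
    filter_upwards [Ioo_mem_nhdsGT_of_mem
      (Set.mem_Ico.2 ⟨le_refl (0:ℝ), div_pos hδ hK⟩)] with ε hε
    have hε0 : (0:ℝ) < ε := hε.1
    have hεK : ε * K < δ := by
      have := (lt_div_iff₀ hK).1 hε.2
      linarith
    have hGε : g0 + ε * (L - ρ) ≤ ⨅ η : ℝ, Fv μ γ₂ (fun ω => X ω + ε * Y ω) η := by
      refine le_ciInf fun η => ?_
      have h1 := eps_lower μ hγ hXm hX hY ε η
      have hDη : D η = -γ₂ * ∫ ω, (if X ω < η then Y ω else 0) ∂μ := rfl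
      rw [← hDη] at h1
      by_cases hcase : Fv μ γ₂ X η ≤ Fv μ γ₂ X ηstar + δ
      · have hD := hδ' η hcase
        have h2 : ε * (L - ρ) ≤ ε * D η := mul_le_mul_of_nonneg_left hD hε0.le
        have h3 := hminstar η
        rw [hg0]
        linarith
      · push_neg at hcase
        have habs := hDbound η
        have h4 := abs_le.1 habs
        rw [hg0]
        nlinarith [le_abs_self L, neg_abs_le L, h4.1, hεK, hε0, hM0, hK]
    have hq : L - ρ ≤ ((⨅ η : ℝ, Fv μ γ₂ (fun ω => X ω + ε * Y ω) η) - g0) / ε := by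
      rw [le_div_iff₀ hε0]
      linarith
    have : c < L - ρ := by rw [hρdef]; linarith
    exact lt_of_lt_of_le this hq
  · intro c hc
    rw [← hLc] at hc
    have hu : Tendsto (fun ε : ℝ => -γ₂ * ∫ ω, (if X ω + ε * Y ω < ηstar then Y ω else 0) ∂μ)
        (𝓝[>] (0:ℝ)) (𝓝 L) := by
      rw [hLdef, hDdef]
      exact (tendsto_upper μ hXm hYm hY (hatomless ηstar)).const_mul (-γ₂)
    filter_upwards [hu.eventually (gt_mem_nhds hc), self_mem_nhdsWithin] with ε h1 h2
    have hε0 : (0:ℝ) < ε := h2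
    have hup := eps_upper μ hγ hXm hX hY hYm ε ηstar
    have hGle : (⨅ η : ℝ, Fv μ γ₂ (fun ω => X ω + ε * Y ω) η)
        ≤ Fv μ γ₂ X ηstar + ε * (-γ₂ * ∫ ω, (if X ω + ε * Y ω < ηstar then Y ω else 0) ∂μ) :=
      le_trans (ciInf_le (Fv_bddBelow μ hγ (hX.add (hY.const_mul ε))) ηstar) hup
    have hqle : ((⨅ η : ℝ, Fv μ γ₂ (fun ω => X ω + ε * Y ω) η) - g0) / ε
        ≤ -γ₂ * ∫ ω, (if X ω + ε * Y ω < ηstar then Y ω else 0) ∂μ := by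
      rw [div_le_iff₀ hε0, hg0]
      nlinarith [hGle]
    exact lt_of_le_of_lt hqle h1

end CvarAux


open CvarAux in
/-- For `l x = γ₂ x⁺` with `γ₂ > 1`, `X` with continuous (atomless)
distribution and `η*` a `1/γ₂`-quantile of `X`, the directional derivative of the
OCE `ρ` at `X` in direction `Y` equals `-γ₂ E[Y · 1_{X < η*}]`. -/
theorem cvar_risk_contribution
    {Ω : Type*} [MeasurableSpace Ω] (μ : Measure Ω) [IsProbabilityMeasure μ]
    (γ₂ : ℝ) (hγ : 1 < γ₂)
    (X Y : Ω → ℝ) (hX : Integrable X μ) (hY : Integrable Y μ)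
    (hatomless : ∀ x : ℝ, μ {ω | X ω = x} = 0)
    (ηstar : ℝ)
    (hq : (μ {ω | X ω < ηstar}).toReal ≤ 1 / γ₂ ∧ 1 / γ₂ ≤ (μ {ω | X ω ≤ ηstar}).toReal) :
    Tendsto
      (fun ε : ℝ =>
        ((⨅ η : ℝ, (∫ ω, γ₂ * max (η - (X ω + ε * Y ω)) 0 ∂μ) - η)
          - (⨅ η : ℝ, (∫ ω, γ₂ * max (η - X ω) 0 ∂μ) - η)) / ε)
      (nhdsWithin 0 (Set.Ioi 0))
      (nhds (-γ₂ * ∫ ω in {ω | X ω < ηstar}, Y ω ∂μ)) := by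
  classical
  have hXae : X =ᵐ[μ] hX.1.mk X := hX.1.ae_eq_mk
  have hYae : Y =ᵐ[μ] hY.1.mk Y := hY.1.ae_eq_mk
  set X' : Ω → ℝ := hX.1.mk X with hX'def
  set Y' : Ω → ℝ := hY.1.mk Y with hY'def
  have hX'm : Measurable X' := hX.1.stronglyMeasurable_mk.measurable
  have hY'm : Measurable Y' := hY.1.stronglyMeasurable_mk.measurable
  have hX' : Integrable X' μ := hX.congr hXae
  have hY' : Integrable Y' μ := hY.congr hYae
  have hsetae : ∀ c : ℝ, {ω | X ω < c} =ᵐ[μ] {ω | X' ω < c} := by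
    intro c
    rw [eventuallyEq_set]
    filter_upwards [hXae] with ω hω
    simp [Set.mem_setOf_eq, hω]
  have hseteq : ∀ c : ℝ, {ω | X ω = c} =ᵐ[μ] {ω | X' ω = c} := by
    intro c
    rw [eventuallyEq_set]
    filter_upwards [hXae] with ω hω
    simp [Set.mem_setOf_eq, hω]
  have hatomless' : ∀ x : ℝ, μ {ω | X' ω = x} = 0 := fun x => by
    rw [← measure_congr (hseteq x)]; exact hatomless x
  have hlt_le : μ {ω | X ω < ηstar} = μ {ω | X ω ≤ ηstar} := by
    refine le_antisymm (measure_mono fun ω h => ?_) ?_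
    · simp only [Set.mem_setOf_eq] at h ⊢
      exact le_of_lt h
    calc μ {ω | X ω ≤ ηstar}
        ≤ μ ({ω | X ω < ηstar} ∪ {ω | X ω = ηstar}) := by
          refine measure_mono fun ω h => ?_
          simp only [Set.mem_setOf_eq, Set.mem_union] at h ⊢
          exact lt_or_eq_of_le h
      _ ≤ μ {ω | X ω < ηstar} + μ {ω | X ω = ηstar} := measure_union_le _ _
      _ = μ {ω | X ω < ηstar} := by rw [hatomless, add_zero]
  have htoReal : (μ {ω | X ω ≤ ηstar}).toReal = (μ {ω | X ω < ηstar}).toReal := by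
    rw [hlt_le]
  have hp0 : (μ {ω | X ω < ηstar}).toReal = 1 / γ₂ :=
    le_antisymm hq.1 (htoReal ▸ hq.2)
  have hp' : (μ {ω | X' ω < ηstar}).toReal = 1 / γ₂ := by
    rw [← measure_congr (hsetae ηstar)]; exact hp0
  have key := cvar_aux μ γ₂ hγ X' Y' hX'm hY'm hX' hY' hatomless' ηstar hp'
  have hint : ∀ ε η : ℝ, (∫ ω, γ₂ * max (η - (X ω + ε * Y ω)) 0 ∂μ)
      = ∫ ω, γ₂ * max (η - (X' ω + ε * Y' ω)) 0 ∂μ := fun ε η =>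
    integral_congr_ae (by filter_upwards [hXae, hYae] with ω h1 h2; rw [h1, h2])
  have hintX : ∀ η : ℝ, (∫ ω, γ₂ * max (η - X ω) 0 ∂μ)
      = ∫ ω, γ₂ * max (η - X' ω) 0 ∂μ := fun η =>
    integral_congr_ae (by filter_upwards [hXae] with ω h1; rw [h1])
  have hfun : (fun ε : ℝ =>
        ((⨅ η : ℝ, (∫ ω, γ₂ * max (η - (X ω + ε * Y ω)) 0 ∂μ) - η)
          - (⨅ η : ℝ, (∫ ω, γ₂ * max (η - X ω) 0 ∂μ) - η)) / ε)
      = (fun ε : ℝ =>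
        ((⨅ η : ℝ, Fv μ γ₂ (fun ω => X' ω + ε * Y' ω) η)
          - (⨅ η : ℝ, Fv μ γ₂ X' η)) / ε) := by
    funext ε
    congr 2
    · exact congrArg _ (funext fun η => by rw [Fv, hint ε η])
    · exact congrArg _ (funext fun η => by rw [Fv, hintX η])
  have hlim : -γ₂ * ∫ ω in {ω | X ω < ηstar}, Y ω ∂μ
      = -γ₂ * ∫ ω, (if X' ω < ηstar then Y' ω else 0) ∂μ := by
    congr 1
    rw [setIntegral_congr_set (hsetae ηstar)]
    rw [integral_congr_ae (ae_restrict_of_ae hYae)]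
    rw [ind_eq X' ηstar Y']
    rw [integral_indicator (measurableSet_lt hX'm measurable_const)]
  rw [hfun, hlim]
  exact key
end

section
/- Let η* ∈ ℝ and consider ψ₁(z,y) = y·1_{y ≤ 0}·1_{z+y < η*}. For u = (u₁,u₂) ∈ ℂ² with Im(u₁) < 0 and Im(u₂ - u₁) < 0, the two-dimensional Fourier transform ∫_{ℝ²} e^{i u₁ z + i u₂ y} ψ₁(z,y) dz dy converges absolutely and equals e^{i u₁ η*} / (i u₁ (u₂ - u₁)²). -/
open MeasureTheory Complex Set Filter
open scoped Topology

lemma aux_reflect_integrableOn {f : ℝ → ℝ} {b : ℝ} (h : IntegrableOn f (Ioi (-b))) :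
    IntegrableOn (fun x => f (-x)) (Iic b) := by
  have A : MeasurableEmbedding fun x : ℝ => -x :=
    (Homeomorph.neg ℝ).isClosedEmbedding.measurableEmbedding
  have hpre : (fun x : ℝ => -x) ⁻¹' Ioi (-b) = Iio b := by
    ext x; simp
  have h1 : Integrable f ((Measure.map (fun x : ℝ => -x) volume).restrict (Ioi (-b))) := by
    rwa [Measure.map_neg_eq_self (volume : Measure ℝ)]
  rw [Measure.restrict_map A.measurable measurableSet_Ioi, hpre,
    A.integrable_map_iff] at h1
  rw [Measure.restrict_congr_set Iio_ae_eq_Iic] at h1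
  exact h1

lemma aux_integrableOn_cexp_Iic (c : ℂ) (hc : 0 < c.re) (b : ℝ) :
    IntegrableOn (fun x : ℝ => Complex.exp (c * x)) (Iic b) := by
  have h0 : IntegrableOn (fun x : ℝ => Real.exp (-c.re * x)) (Ioi (-b)) := by
    simpa [neg_mul] using exp_neg_integrableOn_Ioi (-b) hc
  have hmaj : IntegrableOn (fun x : ℝ => Real.exp (c.re * x)) (Iic b) := by
    have := aux_reflect_integrableOn h0
    simpa [neg_mul, mul_neg, neg_neg] using this
  refine Integrable.mono' hmaj ?_ ?_
  · exact (Complex.continuous_exp.comp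
      (continuous_const.mul Complex.continuous_ofReal)).aestronglyMeasurable
  · filter_upwards with x
    rw [Complex.norm_exp]
    simp [Complex.mul_re]

lemma aux_integrableOn_mul_cexp (c : ℂ) (hc : 0 < c.re) :
    IntegrableOn (fun x : ℝ => (x : ℂ) * Complex.exp (c * x)) (Iic (0 : ℝ)) := by
  have h0 : IntegrableOn (fun x : ℝ => x * Real.exp (-c.re * x)) (Ioi (0 : ℝ)) := by
    have := integrableOn_rpow_mul_exp_neg_mul_rpow (p := 1) (s := 1)
      (by norm_num) zero_lt_one hc
    simpa [Real.rpow_one] using this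
  have h1 : IntegrableOn (fun x : ℝ => -x * Real.exp (c.re * x)) (Iic (0 : ℝ)) := by
    have := aux_reflect_integrableOn (b := 0) (by simpa using h0)
    simpa [neg_mul, mul_neg, neg_neg] using this
  refine Integrable.mono' h1 ?_ ?_
  · exact (Complex.continuous_ofReal.mul (Complex.continuous_exp.comp
      (continuous_const.mul Complex.continuous_ofReal))).aestronglyMeasurable
  · rw [ae_restrict_iff' measurableSet_Iic]
    filter_upwards with x hx
    rw [norm_mul, Complex.norm_exp,
      Complex.norm_real, Real.norm_eq_abs, abs_of_nonpos hx]
    simp [Complex.mul_re]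

lemma aux_tendsto_cexp_atBot (c : ℂ) (hc : 0 < c.re) :
    Tendsto (fun x : ℝ => Complex.exp (c * x)) atBot (𝓝 0) := by
  rw [tendsto_zero_iff_norm_tendsto_zero]
  have heq : (fun x : ℝ => ‖Complex.exp (c * x)‖) = fun x : ℝ => Real.exp (c.re * x) := by
    funext x
    rw [Complex.norm_exp]
    simp [Complex.mul_re]
  rw [heq]
  exact Real.tendsto_exp_atBot.comp (tendsto_id.const_mul_atBot hc)

lemma aux_tendsto_mul_cexp_atBot (c : ℂ) (hc : 0 < c.re) :
    Tendsto (fun x : ℝ => (x : ℂ) * Complex.exp (c * x)) atBot (𝓝 0) := by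
  rw [tendsto_zero_iff_norm_tendsto_zero]
  have key : Tendsto (fun x : ℝ => |x| * Real.exp (c.re * x)) atBot (𝓝 0) := by
    have h := (tendsto_rpow_mul_exp_neg_mul_atTop_nhds_zero 1 c.re hc).comp
      tendsto_neg_atBot_atTop
    refine h.congr' ?_
    filter_upwards [Iic_mem_atBot (0 : ℝ)] with x hx
    have hx0 : (0 : ℝ) ≤ -x := by linarith [mem_Iic.mp hx]
    simp only [Function.comp]
    rw [Real.rpow_one, abs_of_nonpos (mem_Iic.mp hx)]
    ring_nf
  refine key.congr ?_
  intro x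
  rw [norm_mul, Complex.norm_real, Real.norm_eq_abs,
    Complex.norm_exp]
  simp [Complex.mul_re]

lemma aux_hasDerivAt_cexp (c : ℂ) (x : ℝ) :
    HasDerivAt (fun x : ℝ => Complex.exp (c * x)) (Complex.exp (c * x) * c) x := by
  have h1 : HasDerivAt (fun x : ℝ => (x : ℂ)) 1 x := by
    simpa using (hasDerivAt_id x).ofReal_comp
  have h2 : HasDerivAt (fun x : ℝ => c * (x : ℂ)) c x := by
    simpa using h1.const_mul c
  exact h2.cexp

lemma aux_integral_cexp_Iic (c : ℂ) (hc : 0 < c.re) (b : ℝ) :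
    ∫ x in Iic b, Complex.exp (c * x) = Complex.exp (c * b) / c := by
  have hc0 : c ≠ 0 := fun h => by simp [h] at hc
  have hcont : Continuous (fun x : ℝ => Complex.exp (c * x) / c) :=
    (Complex.continuous_exp.comp (continuous_const.mul Complex.continuous_ofReal)).div_const c
  have hderiv : ∀ x ∈ Iio b,
      HasDerivAt (fun x : ℝ => Complex.exp (c * x) / c) (Complex.exp (c * x)) x := by
    intro x _
    have := (aux_hasDerivAt_cexp c x).div_const c
    simpa [mul_div_assoc, div_self hc0] using this
  have htend : Tendsto (fun x : ℝ => Complex.exp (c * x) / c) atBot (𝓝 0) := by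
    simpa using (aux_tendsto_cexp_atBot c hc).div_const c
  have := integral_Iic_of_hasDerivAt_of_tendsto hcont.continuousWithinAt hderiv
    (aux_integrableOn_cexp_Iic c hc b) htend
  simpa using this

lemma aux_integral_mul_cexp_Iic (c : ℂ) (hc : 0 < c.re) :
    ∫ x in Iic (0 : ℝ), (x : ℂ) * Complex.exp (c * x) = -(1 / c ^ 2) := by
  have hc0 : c ≠ 0 := fun h => by simp [h] at hc
  set f : ℝ → ℂ := fun x => ((x : ℂ) / c - 1 / c ^ 2) * Complex.exp (c * x) with hf
  have hcont : Continuous f := by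
    apply Continuous.mul
    · exact (Complex.continuous_ofReal.div_const c).sub continuous_const
    · exact Complex.continuous_exp.comp (continuous_const.mul Complex.continuous_ofReal)
  have hderiv : ∀ x ∈ Iio (0 : ℝ),
      HasDerivAt f ((x : ℂ) * Complex.exp (c * x)) x := by
    intro x _
    have h1 : HasDerivAt (fun x : ℝ => (x : ℂ) / c - 1 / c ^ 2) (1 / c) x := by
      have : HasDerivAt (fun x : ℝ => (x : ℂ)) 1 x := by
        simpa using (hasDerivAt_id x).ofReal_comp
      exact (this.div_const c).sub_const (1 / c ^ 2)
    have h2 := h1.mul (aux_hasDerivAt_cexp c x)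
    convert h2 using 1
    case e'_8 => ext y; rfl
    · rfl
    field_simp
    ring
  have htend : Tendsto f atBot (𝓝 0) := by
    have h1 : Tendsto (fun x : ℝ => (x : ℂ) * Complex.exp (c * x) / c) atBot (𝓝 0) := by
      simpa using (aux_tendsto_mul_cexp_atBot c hc).div_const c
    have h2 : Tendsto (fun x : ℝ => Complex.exp (c * x) / c ^ 2) atBot (𝓝 0) := by
      simpa using (aux_tendsto_cexp_atBot c hc).div_const (c ^ 2)
    have := h1.sub h2
    rw [sub_zero] at this
    refine this.congr (fun x => ?_)
    rw [hf]
    ring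
  have := integral_Iic_of_hasDerivAt_of_tendsto hcont.continuousWithinAt hderiv
    (aux_integrableOn_mul_cexp c hc) htend
  rw [this, hf]
  simp

/-- The shear `(z, y) ↦ (z + y, y)` as a measurable equivalence of `ℝ × ℝ`. -/
def shearEquiv : ℝ × ℝ ≃ᵐ ℝ × ℝ where
  toFun p := (p.1 + p.2, p.2)
  invFun p := (p.1 - p.2, p.2)
  left_inv p := by simp
  right_inv p := by simp
  measurable_toFun := (measurable_fst.add measurable_snd).prodMk measurable_snd
  measurable_invFun := (measurable_fst.sub measurable_snd).prodMk measurable_snd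

lemma shearEquiv_measurePreserving :
    MeasurePreserving shearEquiv
      ((volume : Measure ℝ).prod volume) ((volume : Measure ℝ).prod volume) := by
  have hS : MeasurePreserving (fun p : ℝ × ℝ => (p.1, p.2 + p.1))
      ((volume : Measure ℝ).prod volume) ((volume : Measure ℝ).prod volume) :=
    (MeasurePreserving.id volume).skew_product (measurable_snd.add measurable_fst)
      (Filter.Eventually.of_forall fun a => map_add_right_eq_self volume a)
  have hswap : MeasurePreserving (Prod.swap : ℝ × ℝ → ℝ × ℝ)
      ((volume : Measure ℝ).prod volume) ((volume : Measure ℝ).prod volume) :=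
    Measure.measurePreserving_swap
  have : MeasurePreserving
      ((Prod.swap : ℝ × ℝ → ℝ × ℝ) ∘ (fun p : ℝ × ℝ => (p.1, p.2 + p.1)) ∘ Prod.swap)
      ((volume : Measure ℝ).prod volume) ((volume : Measure ℝ).prod volume) :=
    (hswap.comp hS).comp hswap
  convert this using 1
  rfl

/-- For `ψ₁(z,y) = y · 1_{y ≤ 0} · 1_{z+y < η*}` and `u₁, u₂ ∈ ℂ` with
`Im u₁ < 0` and `Im (u₂ - u₁) < 0`, the two-dimensional Fourier transform converges
absolutely and equals `e^{i u₁ η*} / (i u₁ (u₂ - u₁)²)`. -/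
theorem fourier_psi_one (ηstar : ℝ) (u₁ u₂ : ℂ)
    (h1 : u₁.im < 0) (h2 : (u₂ - u₁).im < 0) :
    Integrable
      (fun p : ℝ × ℝ =>
        Complex.exp (Complex.I * u₁ * p.1 + Complex.I * u₂ * p.2) *
          ((if p.2 ≤ 0 ∧ p.1 + p.2 < ηstar then p.2 else 0 : ℝ) : ℂ))
      volume ∧
    (∫ p : ℝ × ℝ,
        Complex.exp (Complex.I * u₁ * p.1 + Complex.I * u₂ * p.2) *
          ((if p.2 ≤ 0 ∧ p.1 + p.2 < ηstar then p.2 else 0 : ℝ) : ℂ))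
      = Complex.exp (Complex.I * u₁ * ηstar) / (Complex.I * u₁ * (u₂ - u₁) ^ 2) := by
  set c₁ : ℂ := Complex.I * u₁ with hc₁def
  set c₂ : ℂ := Complex.I * (u₂ - u₁) with hc₂def
  have hc₁ : 0 < c₁.re := by
    rw [hc₁def]
    simp [Complex.mul_re]
    linarith
  have hc₂ : 0 < c₂.re := by
    have h2' : u₂.im - u₁.im < 0 := by simpa using h2
    rw [hc₂def]
    simp [Complex.mul_re]
    linarith
  set F : ℝ → ℂ := (Iio ηstar).indicator (fun z => Complex.exp (c₁ * z)) with hFdef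
  set G : ℝ → ℂ := (Iic (0 : ℝ)).indicator
    (fun y => (y : ℂ) * Complex.exp (c₂ * y)) with hGdef
  have hFint : Integrable F volume := by
    rw [hFdef, integrable_indicator_iff measurableSet_Iio]
    exact (aux_integrableOn_cexp_Iic c₁ hc₁ ηstar).mono_set Iio_subset_Iic_self
  have hGint : Integrable G volume := by
    rw [hGdef, integrable_indicator_iff measurableSet_Iic]
    exact aux_integrableOn_mul_cexp c₂ hc₂
  have hFval : ∫ z, F z = Complex.exp (c₁ * ηstar) / c₁ := by
    rw [hFdef, integral_indicator measurableSet_Iio, ← integral_Iic_eq_integral_Iio]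
    exact aux_integral_cexp_Iic c₁ hc₁ ηstar
  have hGval : ∫ y, G y = -(1 / c₂ ^ 2) := by
    rw [hGdef, integral_indicator measurableSet_Iic]
    exact aux_integral_mul_cexp_Iic c₂ hc₂
  have hfun : (fun p : ℝ × ℝ =>
        Complex.exp (Complex.I * u₁ * p.1 + Complex.I * u₂ * p.2) *
          ((if p.2 ≤ 0 ∧ p.1 + p.2 < ηstar then p.2 else 0 : ℝ) : ℂ))
      = fun p : ℝ × ℝ => F (p.1 + p.2) * G p.2 := by
    funext p
    rw [hFdef, hGdef]
    simp only [indicator_apply, mem_Iio, mem_Iic]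
    by_cases hy : p.2 ≤ 0 <;> by_cases hz : p.1 + p.2 < ηstar
    · rw [if_pos ⟨hy, hz⟩, if_pos hz, if_pos hy]
      have hexp : c₁ * ((p.1 + p.2 : ℝ) : ℂ) + c₂ * (p.2 : ℂ)
          = Complex.I * u₁ * p.1 + Complex.I * u₂ * p.2 := by
        rw [hc₁def, hc₂def]
        push_cast
        ring
      rw [← hexp, Complex.exp_add]
      ring
    · rw [if_neg (by tauto), if_neg hz]; simp
    · rw [if_neg (by tauto), if_neg hy]; simp
    · rw [if_neg (by tauto), if_neg hy]; simp
  have hvol : (volume : Measure (ℝ × ℝ)) = (volume : Measure ℝ).prod volume := rfl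
  have hH : Integrable (fun q : ℝ × ℝ => F q.1 * G q.2)
      ((volume : Measure ℝ).prod volume) := hFint.mul_prod hGint
  have hcomp : (fun p : ℝ × ℝ => F (p.1 + p.2) * G p.2)
      = (fun q : ℝ × ℝ => F q.1 * G q.2) ∘ shearEquiv := rfl
  have hIntegrable : Integrable
      (fun p : ℝ × ℝ =>
        Complex.exp (Complex.I * u₁ * p.1 + Complex.I * u₂ * p.2) *
          ((if p.2 ≤ 0 ∧ p.1 + p.2 < ηstar then p.2 else 0 : ℝ) : ℂ)) volume := by
    rw [hfun, hvol, hcomp]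
    exact (shearEquiv_measurePreserving.integrable_comp_emb
      shearEquiv.measurableEmbedding).mpr hH
  refine ⟨hIntegrable, ?_⟩
  have hu₁ : u₁ ≠ 0 := fun h => by simp [h] at h1
  have hc₁0 : c₁ ≠ 0 := fun h => by simp [h] at hc₁
  have hd : u₂ - u₁ ≠ 0 := fun h => by simp [h] at h2
  calc (∫ p : ℝ × ℝ,
        Complex.exp (Complex.I * u₁ * p.1 + Complex.I * u₂ * p.2) *
          ((if p.2 ≤ 0 ∧ p.1 + p.2 < ηstar then p.2 else 0 : ℝ) : ℂ))
      = ∫ p : ℝ × ℝ, (fun q : ℝ × ℝ => F q.1 * G q.2) (shearEquiv p)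
          ∂((volume : Measure ℝ).prod volume) := by
        rw [hfun, hvol, hcomp]; rfl
    _ = ∫ q : ℝ × ℝ, F q.1 * G q.2 ∂((volume : Measure ℝ).prod volume) :=
        shearEquiv_measurePreserving.integral_comp' (fun q : ℝ × ℝ => F q.1 * G q.2)
    _ = (∫ z, F z) * ∫ y, G y := integral_prod_mul F G
    _ = Complex.exp (c₁ * ηstar) / c₁ * -(1 / c₂ ^ 2) := by rw [hFval, hGval]
    _ = Complex.exp (Complex.I * u₁ * ηstar) / (Complex.I * u₁ * (u₂ - u₁) ^ 2) := by
        rw [hc₁def, hc₂def]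
        have hsq : (Complex.I * (u₂ - u₁)) ^ 2 = -((u₂ - u₁) ^ 2) := by
          rw [mul_pow, Complex.I_sq]; ring
        rw [hsq]
        have hIu : Complex.I * u₁ ≠ 0 := mul_ne_zero Complex.I_ne_zero hu₁
        field_simp
end
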